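/- arXiv:1910.04243 — 8 statements merged into one kernel-verified Lean document; each statement's English description precedes it below -/
import Mathlib

section
/- Suppose (X_n), (X_n'), (Y_n), (Y_n') are sequences of random elements of measurable spaces E_1, E_2 on a common probability space such that (1) X_n' and Y_n' are independent for each n, and (2) P{X_n ≠ X_n'} → 0 and P{Y_n ≠ Y_n'} → 0 as n → ∞. Then ||P_{(X_n,Y_n)} − P_{X_n} × P_{Y_n}||_var → 0. -/
open MeasureTheory Filter

/-! Coupling: the laws of two random elements `f, g` on one probability space are at total
variation distance at most `2 P{f ≠ g}`. Applied to `(X, Y)` and `(X', Y')` this compares the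
joint law of `(X, Y)` with that of `(X', Y')`, which by independence is `P_{X'} × P_{Y'}`;
applied on `Ω × Ω` to `Prod.map X Y` and `Prod.map X' Y'` it compares `P_{X'} × P_{Y'}` with
`P_X × P_Y`. The triangle inequality for total variation concludes. -/

namespace MeasureTheory

namespace SignedMeasure

theorem totalVariation_sub_le_add {α : Type*} [MeasurableSpace α] (s t u : SignedMeasure α) :
    (s - u).totalVariation ≤ (s - t).totalVariation + (t - u).totalVariation := by
  simp only [totalVariation_eq_variation]
  simpa only [sub_add_sub_cancel] using VectorMeasure.variation_add_le (μ := s - t) (ν := t - u)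

end SignedMeasure

variable {Ω E : Type*} [MeasurableSpace Ω] [MeasurableSpace E]

omit [MeasurableSpace E] in
theorem measureReal_preimage_le_add_inter_ne (P : Measure Ω) [IsFiniteMeasure P]
    (f g : Ω → E) (A : Set E) :
    P.real (f ⁻¹' A) ≤ P.real (g ⁻¹' A) + P.real (f ⁻¹' A ∩ {ω | f ω ≠ g ω}) := by
  refine (measureReal_mono fun ω hω ↦ ?_).trans (measureReal_union_le _ _)
  by_cases h : f ω = g ω
  · exact Or.inl (by simpa [Set.mem_preimage, h] using hω)
  · exact Or.inr ⟨hω, h⟩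

theorem enorm_toSignedMeasure_map_sub_apply_le (P : Measure Ω) [IsFiniteMeasure P]
    {f g : Ω → E} (hf : Measurable f) (hg : Measurable g) {A : Set E} (hA : MeasurableSet A) :
    ‖((P.map f).toSignedMeasure - (P.map g).toSignedMeasure) A‖ₑ
      ≤ ((P.restrict {ω | f ω ≠ g ω}).map f
        + (P.restrict {ω | f ω ≠ g ω}).map g) A := by
  have hf' := measureReal_preimage_le_add_inter_ne P f g A
  have hg' := measureReal_preimage_le_add_inter_ne P g f A
  simp only [ne_comm (a := g _)] at hg'
  set D := {ω | f ω ≠ g ω}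
  calc ‖((P.map f).toSignedMeasure - (P.map g).toSignedMeasure) A‖ₑ
      = ENNReal.ofReal |P.real (f ⁻¹' A) - P.real (g ⁻¹' A)| := by
        rw [sub_apply, Measure.toSignedMeasure_apply_measurable hA,
          Measure.toSignedMeasure_apply_measurable hA, map_measureReal_apply hf hA,
          map_measureReal_apply hg hA, Real.enorm_eq_ofReal_abs]
    _ ≤ ENNReal.ofReal (P.real (f ⁻¹' A ∩ D) + P.real (g ⁻¹' A ∩ D)) :=
        ENNReal.ofReal_le_ofReal <| abs_sub_le_iff.2
          ⟨by linarith [measureReal_nonneg (μ := P) (s := g ⁻¹' A ∩ D)],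
            by linarith [measureReal_nonneg (μ := P) (s := f ⁻¹' A ∩ D)]⟩
    _ = ((P.restrict D).map f + (P.restrict D).map g) A := by
        rw [ENNReal.ofReal_add measureReal_nonneg measureReal_nonneg, ofReal_measureReal,
          ofReal_measureReal, Measure.add_apply, Measure.map_apply hf hA,
          Measure.map_apply hg hA, Measure.restrict_apply (hf hA), Measure.restrict_apply (hg hA)]

theorem totalVariation_map_sub_map_le (P : Measure Ω) [IsFiniteMeasure P]
    {f g : Ω → E} (hf : Measurable f) (hg : Measurable g) :
    ((P.map f).toSignedMeasure - (P.map g).toSignedMeasure).totalVariation Set.univ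
      ≤ 2 * P {ω | f ω ≠ g ω} := by
  rw [SignedMeasure.totalVariation_eq_variation]
  refine (VectorMeasure.variation_le_of_forall_enorm_le
    (fun A hA ↦ enorm_toSignedMeasure_map_sub_apply_le P hf hg hA) Set.univ).trans_eq ?_
  rw [Measure.add_apply, Measure.map_apply hf .univ, Measure.map_apply hg .univ,
    Set.preimage_univ, Set.preimage_univ, Measure.restrict_apply_univ, two_mul]

theorem measure_prodMk_ne_le {α β γ : Type*} [MeasurableSpace α] (μ : Measure α)
    (f f' : α → β) (g g' : α → γ) :
    μ {x | (f x, g x) ≠ (f' x, g' x)} ≤ μ {x | f x ≠ f' x} + μ {x | g x ≠ g' x} :=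
  (measure_mono fun x hx ↦ by
    simpa only [Set.mem_ofPred_eq, Set.mem_union, ne_eq, Prod.mk.injEq, not_and_or] using hx).trans
    (measure_union_le _ _)

theorem totalVariation_map_prodMk_sub_map_prodMk_le {E' : Type*} [MeasurableSpace E']
    (P : Measure Ω) [IsFiniteMeasure P] {f f' : Ω → E} {g g' : Ω → E'}
    (hf : Measurable f) (hf' : Measurable f') (hg : Measurable g) (hg' : Measurable g') :
    ((P.map fun ω ↦ (f ω, g ω)).toSignedMeasure
        - (P.map fun ω ↦ (f' ω, g' ω)).toSignedMeasure).totalVariation Set.univ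
      ≤ 2 * (P {ω | f ω ≠ f' ω} + P {ω | g ω ≠ g' ω}) :=
  (totalVariation_map_sub_map_le P (hf.prodMk hg) (hf'.prodMk hg')).trans
    (by gcongr; exact measure_prodMk_ne_le P f f' g g')

theorem totalVariation_prod_map_sub_prod_map_le {Ω' E' : Type*} [MeasurableSpace Ω']
    [MeasurableSpace E'] (μ : Measure Ω) (ν : Measure Ω') [IsProbabilityMeasure μ]
    [IsProbabilityMeasure ν] {f f' : Ω → E} {g g' : Ω' → E'}
    (hf : Measurable f) (hf' : Measurable f') (hg : Measurable g) (hg' : Measurable g') :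
    (((μ.map f).prod (ν.map g)).toSignedMeasure
        - ((μ.map f').prod (ν.map g')).toSignedMeasure).totalVariation Set.univ
      ≤ 2 * (μ {x | f x ≠ f' x} + ν {y | g y ≠ g' y}) := by
  rw [Measure.toSignedMeasure_congr (Measure.map_prod_map μ ν hf hg),
    Measure.toSignedMeasure_congr (Measure.map_prod_map μ ν hf' hg')]
  refine (totalVariation_map_sub_map_le (μ.prod ν) (hf.prodMap hg) (hf'.prodMap hg')).trans ?_
  gcongr
  calc (μ.prod ν) {z | Prod.map f g z ≠ Prod.map f' g' z}
      ≤ (μ.prod ν) (Prod.fst ⁻¹' {x | f x ≠ f' x})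
          + (μ.prod ν) (Prod.snd ⁻¹' {y | g y ≠ g' y}) :=
        measure_prodMk_ne_le _ _ _ _ _
    _ = μ {x | f x ≠ f' x} + ν {y | g y ≠ g' y} := by
        rw [← Set.prod_univ, ← Set.univ_prod, Measure.prod_prod, Measure.prod_prod,
          measure_univ, measure_univ, mul_one, one_mul]

end MeasureTheory

theorem stmt_1 {Ω E₁ E₂ : Type*} [MeasurableSpace Ω]
    [MeasurableSpace E₁] [MeasurableSpace E₂]
    (P : Measure Ω) [IsProbabilityMeasure P]
    (X X' : ℕ → Ω → E₁) (Y Y' : ℕ → Ω → E₂)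
    (hX : ∀ n, Measurable (X n)) (hX' : ∀ n, Measurable (X' n))
    (hY : ∀ n, Measurable (Y n)) (hY' : ∀ n, Measurable (Y' n))
    (hindep : ∀ n, ProbabilityTheory.IndepFun (X' n) (Y' n) P)
    (hXX' : Tendsto (fun n => P {ω | X n ω ≠ X' n ω}) atTop (nhds 0))
    (hYY' : Tendsto (fun n => P {ω | Y n ω ≠ Y' n ω}) atTop (nhds 0)) :
    Tendsto (fun n =>
        ((P.map (fun ω => (X n ω, Y n ω))).toSignedMeasure
          - ((P.map (X n)).prod (P.map (Y n))).toSignedMeasure).totalVariation Set.univ)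
      atTop (nhds 0) := by
  set ε := fun n ↦ P {ω | X n ω ≠ X' n ω} + P {ω | Y n ω ≠ Y' n ω}
  have hε : Tendsto ε atTop (nhds 0) := by simpa using hXX'.add hYY'
  have h2ε := ENNReal.Tendsto.const_mul hε (.inr (ENNReal.ofNat_ne_top (n := 2)))
  refine tendsto_of_tendsto_of_tendsto_of_le_of_le tendsto_const_nhds
    (by simpa using h2ε.add h2ε) (fun _ ↦ zero_le) fun n ↦ ?_
  have hlaw : P.map (fun ω ↦ (X' n ω, Y' n ω)) = (P.map (X' n)).prod (P.map (Y' n)) :=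
    (ProbabilityTheory.indepFun_iff_map_prod_eq_prod_map_map (hX' n).aemeasurable
      (hY' n).aemeasurable).1 (hindep n)
  refine (SignedMeasure.totalVariation_sub_le_add _
    (P.map fun ω ↦ (X' n ω, Y' n ω)).toSignedMeasure _ _).trans (add_le_add ?_ ?_)
  · exact totalVariation_map_prodMk_sub_map_prodMk_le P (hX n) (hX' n) (hY n) (hY' n)
  · rw [Measure.toSignedMeasure_congr hlaw, ← SignedMeasure.totalVariation_neg, neg_sub]
    exact totalVariation_prod_map_sub_prod_map_le P P (hX n) (hX' n) (hY n) (hY' n)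
end

section
/- Under the assumptions of the previous setting (conditional independence given Ω_n with δ_n := P(Ω_n^c) < 1), for every measurable A, B one has |P{X_n ∈ A, Y_n ∈ B} − P{X_n ∈ A}P{Y_n ∈ B}| ≤ 2δ_n(1 + 1/(1 − δ_n)). -/
/-!
Conditioning on `Ω'` moves the probability of any event `t` by at most `δ = P Ω'ᶜ`: with
`p = P Ω'`, the difference `P t - P (t ∩ Ω') / p` equals `P (t \ Ω') - (P (t ∩ Ω') / p) * δ`,
a difference of two numbers in `[0, δ]`. The events `X ⁻¹' A` and `Y ⁻¹' B` are independent
under `P[|Ω']`, so passing from the conditional to the unconditional probabilities of the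
intersection and of the two factors costs at most `3δ ≤ 2δ(1 + 1/(1 - δ))`.
-/

open MeasureTheory ProbabilityTheory

theorem abs_mul_sub_mul_le_of_abs_le_one {a b c d : ℝ} (ha : |a| ≤ 1) (hd : |d| ≤ 1) :
    |a * b - c * d| ≤ |b - d| + |a - c| :=
  calc |a * b - c * d| = |a * (b - d) + (a - c) * d| := by ring_nf
    _ ≤ |a| * |b - d| + |a - c| * |d| := by
        rw [← abs_mul, ← abs_mul]; exact abs_add_le _ _
    _ ≤ 1 * |b - d| + |a - c| * 1 := by gcongr
    _ = |b - d| + |a - c| := by ring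

section

variable {Ω : Type*} [MeasurableSpace Ω] {μ ν : Measure Ω} {s t : Set Ω}

theorem measureReal_cond_apply (hs : MeasurableSet s) (t : Set Ω) :
    μ[|s].real t = μ.real (s ∩ t) / μ.real s := by
  rw [measureReal_def, cond_apply hs, ENNReal.toReal_mul, ENNReal.toReal_inv, div_eq_inv_mul]
  rfl

theorem abs_measureReal_sub_cond_le [IsProbabilityMeasure μ] (hs : MeasurableSet s)
    (hs₀ : μ s ≠ 0) (t : Set Ω) : |μ.real t - μ[|s].real t| ≤ μ.real sᶜ := by
  set p := μ.real s
  set q := μ.real (s ∩ t) / p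
  have hp : 0 < p := measureReal_nonneg.lt_of_ne' ((measureReal_ne_zero_iff).2 hs₀)
  have hq₀ : 0 ≤ q := div_nonneg measureReal_nonneg hp.le
  have hq₁ : q ≤ 1 := div_le_one_of_le₀ (measureReal_mono Set.inter_subset_left) hp.le
  have hsplit : μ.real t = q * p + μ.real (t \ s) := by
    rw [div_mul_cancel₀ _ hp.ne', Set.inter_comm, measureReal_inter_add_sdiff hs]
  have hcompl : μ.real sᶜ = 1 - p := probReal_compl_eq_one_sub hs
  have hdiff : μ.real (t \ s) ≤ 1 - p := hcompl ▸ measureReal_mono (fun _ h ↦ h.2)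
  have hp₁ : 0 ≤ 1 - p := sub_nonneg.2 measureReal_le_one
  rw [measureReal_cond_apply hs, hsplit, hcompl]
  calc |q * p + μ.real (t \ s) - q| = |μ.real (t \ s) - q * (1 - p)| := by ring_nf
    _ ≤ 1 - p := abs_sub_le_of_nonneg_of_le measureReal_nonneg hdiff
        (mul_nonneg hq₀ hp₁) (mul_le_of_le_one_left hp₁ hq₁)

theorem abs_measureReal_inter_sub_mul_le [IsProbabilityMeasure μ] [IsProbabilityMeasure ν]
    {ε : ℝ} (hε : ∀ u, |μ.real u - ν.real u| ≤ ε)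
    (hind : ν.real (s ∩ t) = ν.real s * ν.real t) :
    |μ.real (s ∩ t) - μ.real s * μ.real t| ≤ 3 * ε := by
  have habs {ρ : Measure Ω} [IsProbabilityMeasure ρ] (u : Set Ω) : |ρ.real u| ≤ 1 := by
    rw [abs_of_nonneg measureReal_nonneg]; exact measureReal_le_one
  have hprod : |ν.real s * ν.real t - μ.real s * μ.real t| ≤ 2 * ε := by
    calc _ ≤ |ν.real t - μ.real t| + |ν.real s - μ.real s| :=
          abs_mul_sub_mul_le_of_abs_le_one (habs s) (habs t)
      _ ≤ 2 * ε := by rw [abs_sub_comm, abs_sub_comm (ν.real s)]; linarith [hε s, hε t]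
  calc |μ.real (s ∩ t) - μ.real s * μ.real t|
      ≤ |μ.real (s ∩ t) - ν.real (s ∩ t)| + |ν.real s * ν.real t - μ.real s * μ.real t| := by
        rw [← hind]; exact abs_sub_le _ _ _
    _ ≤ 3 * ε := by linarith [hε (s ∩ t)]

end

theorem stmt_3_general {Ω E₁ E₂ : Type*} [MeasurableSpace Ω]
    [MeasurableSpace E₁] [MeasurableSpace E₂]
    (P : Measure Ω) [IsProbabilityMeasure P]
    (X : Ω → E₁) (Y : Ω → E₂)
    (Ω' : Set Ω) (hΩ'meas : MeasurableSet Ω')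
    (δ : ℝ) (hδ : δ = (P Ω'ᶜ).toReal) (hδlt : δ < 1)
    (hcondindep : ∀ A : Set E₁, ∀ B : Set E₂, MeasurableSet A → MeasurableSet B →
      P ({ω | X ω ∈ A ∧ Y ω ∈ B} ∩ Ω') / P Ω'
        = (P ({ω | X ω ∈ A} ∩ Ω') / P Ω') * (P ({ω | Y ω ∈ B} ∩ Ω') / P Ω'))
    (A : Set E₁) (B : Set E₂) (hA : MeasurableSet A) (hB : MeasurableSet B) :
    |(P {ω | X ω ∈ A ∧ Y ω ∈ B}).toReal
        - (P {ω | X ω ∈ A}).toReal * (P {ω | Y ω ∈ B}).toReal|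
      ≤ 2 * δ * (1 + 1 / (1 - δ)) := by
  have hδ₀ : 0 ≤ δ := hδ ▸ ENNReal.toReal_nonneg
  have hδ' : δ = 1 - P.real Ω' := hδ.trans (probReal_compl_eq_one_sub hΩ'meas)
  have hΩ' : P Ω' ≠ 0 := (measureReal_ne_zero_iff).1 (by linarith : 0 < P.real Ω').ne'
  have := cond_isProbabilityMeasure (μ := P) hΩ'
  have hcond : ∀ E : Set Ω, P (E ∩ Ω') / P Ω' = P[E | Ω'] := fun E ↦ by
    rw [cond_apply hΩ'meas, Set.inter_comm, ENNReal.div_eq_inv_mul]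
  have hind := congrArg ENNReal.toReal (hcondindep A B hA hB)
  simp only [hcond, ENNReal.toReal_mul] at hind
  calc _ ≤ 3 * δ := abs_measureReal_inter_sub_mul_le
          (fun u ↦ hδ ▸ abs_measureReal_sub_cond_le hΩ'meas hΩ' u) hind
    _ ≤ 2 * δ * (1 + 1 / (1 - δ)) := by
        have : 1 ≤ 1 / (1 - δ) := by rw [le_div_iff₀ (by linarith)]; linarith
        nlinarith

theorem stmt_3 {Ω E₁ E₂ : Type*} [MeasurableSpace Ω]
    [MeasurableSpace E₁] [MeasurableSpace E₂]
    (P : Measure Ω) [IsProbabilityMeasure P]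
    (X : Ω → E₁) (Y : Ω → E₂)
    (hX : Measurable X) (hY : Measurable Y)
    (Ω' : Set Ω) (hΩ'meas : MeasurableSet Ω')
    (δ : ℝ) (hδ : δ = (P Ω'ᶜ).toReal) (hδlt : δ < 1)
    (hcondindep : ∀ A : Set E₁, ∀ B : Set E₂, MeasurableSet A → MeasurableSet B →
      P ({ω | X ω ∈ A ∧ Y ω ∈ B} ∩ Ω') / P Ω'
        = (P ({ω | X ω ∈ A} ∩ Ω') / P Ω') * (P ({ω | Y ω ∈ B} ∩ Ω') / P Ω'))
    (A : Set E₁) (B : Set E₂) (hA : MeasurableSet A) (hB : MeasurableSet B) :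
    |(P {ω | X ω ∈ A ∧ Y ω ∈ B}).toReal
        - (P {ω | X ω ∈ A}).toReal * (P {ω | Y ω ∈ B}).toReal|
      ≤ 2 * δ * (1 + 1 / (1 - δ)) :=
  stmt_3_general P X Y Ω' hΩ'meas δ hδ hδlt hcondindep A B hA hB
end

section
/- Let a_0,…,a_{n−1} and b_0,…,b_{2^n−1} be real numbers each with absolute value at most 1, and let sign(i,j) = 2·χ(i,j) − 1 where χ(i,j) ∈ {0,1} is the i-th binary digit of j. Then |∑_{i=0}^{n−1} ∑_{j=0}^{2^n−1} a_i b_j sign(i,j)| ≤ 2^n √n. -/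
/-!
The vectors `(sign(i, j))_j`, `i < n`, are pairwise orthogonal in `ℝ^(2ⁿ)`, each of squared
length `2ⁿ`. Hence `c_j = ∑ᵢ aᵢ sign(i, j)` satisfies `∑ⱼ c_j² = 2ⁿ ∑ᵢ aᵢ² ≤ 2ⁿ n`, and
Cauchy–Schwarz gives `|∑ⱼ bⱼ c_j| ≤ √(2ⁿ · 2ⁿ n)`.
-/

open Finset

noncomputable def bitSign (i j : ℕ) : ℝ := 2 * ((j / 2 ^ i % 2 : ℕ) : ℝ) - 1

lemma bitSign_eq_ite (i j : ℕ) : bitSign i j = if j.testBit i then 1 else -1 := by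
  rw [Nat.testBit_eq_decide_div_mod_eq, bitSign]
  rcases Nat.mod_two_eq_zero_or_one (j / 2 ^ i) with h | h <;> norm_num [h]

lemma bitSign_mul_self (i j : ℕ) : bitSign i j * bitSign i j = 1 := by
  rw [bitSign_eq_ite]; split_ifs <;> norm_num

lemma bitSign_xor_two_pow (i j k : ℕ) :
    bitSign i (j ^^^ 2 ^ k) = if k = i then -bitSign i j else bitSign i j := by
  simp only [bitSign_eq_ite, Nat.testBit_xor, Nat.testBit_two_pow]
  by_cases hki : k = i <;> cases j.testBit i <;> simp [hki]

/-- For `i ≠ k`, flipping bit `k` is an involution of `{0, …, 2ⁿ - 1}` that negates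
`bitSign i * bitSign k`. -/
lemma sum_bitSign_mul_bitSign {n k : ℕ} (i : ℕ) (hk : k < n) :
    ∑ j ∈ range (2 ^ n), bitSign i j * bitSign k j = if i = k then 2 ^ n else 0 := by
  split_ifs with hik
  · simp [hik, bitSign_mul_self]
  refine sum_involution (fun j _ => j ^^^ 2 ^ k) (fun j _ => ?_) (fun j _ _ => ?_)
    (fun j hj => ?_) (fun j _ => ?_)
  · rw [bitSign_xor_two_pow, bitSign_xor_two_pow, if_neg (Ne.symm hik), if_pos rfl]; ring
  · intro h; simpa [Nat.testBit_xor] using congrArg (Nat.testBit · k) h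
  · exact mem_range.2 (Nat.xor_lt_two_pow (mem_range.1 hj) (Nat.pow_lt_pow_right one_lt_two hk))
  · simp

lemma sum_sq_sum_mul_bitSign (n : ℕ) (a : ℕ → ℝ) :
    ∑ j ∈ range (2 ^ n), (∑ i ∈ range n, a i * bitSign i j) ^ 2
      = 2 ^ n * ∑ i ∈ range n, a i ^ 2 := by
  calc _ = ∑ i ∈ range n, ∑ k ∈ range n,
        a i * a k * ∑ j ∈ range (2 ^ n), bitSign i j * bitSign k j := by
        simp_rw [sq, sum_mul_sum, mul_sum]
        rw [sum_comm]
        refine sum_congr rfl fun i _ => ?_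
        rw [sum_comm]
        exact sum_congr rfl fun k _ => sum_congr rfl fun j _ => by ring
    _ = ∑ i ∈ range n, 2 ^ n * a i ^ 2 := by
        refine sum_congr rfl fun i hi => ?_
        rw [sum_congr rfl fun k hk => by rw [sum_bitSign_mul_bitSign i (mem_range.1 hk)]]
        simp [hi, sq, mul_comm]
    _ = _ := (mul_sum _ _ _).symm

lemma abs_sum_mul_le_sqrt_card_mul_sum_sq {ι : Type*} (s : Finset ι) (b c : ι → ℝ)
    (hb : ∀ j ∈ s, |b j| ≤ 1) :
    |∑ j ∈ s, b j * c j| ≤ √(#s * ∑ j ∈ s, c j ^ 2) := by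
  refine Real.abs_le_sqrt (sq_sum_le_card_mul_sum_sq.trans ?_)
  refine mul_le_mul_of_nonneg_left (sum_le_sum fun j hj => ?_) (Nat.cast_nonneg _)
  rw [mul_pow]
  exact mul_le_of_le_one_left (sq_nonneg _) ((sq_le_one_iff_abs_le_one _).2 (hb j hj))

theorem stmt_5 (n : ℕ) (a b : ℕ → ℝ)
    (ha : ∀ i < n, |a i| ≤ 1) (hb : ∀ j < 2 ^ n, |b j| ≤ 1) :
    |∑ i ∈ Finset.range n, ∑ j ∈ Finset.range (2 ^ n),
        a i * b j * (2 * ((j / 2 ^ i % 2 : ℕ) : ℝ) - 1)|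
      ≤ 2 ^ n * Real.sqrt n := by
  have hswap : ∑ i ∈ range n, ∑ j ∈ range (2 ^ n), a i * b j * bitSign i j
      = ∑ j ∈ range (2 ^ n), b j * ∑ i ∈ range n, a i * bitSign i j := by
    rw [sum_comm]
    simp_rw [mul_sum]
    exact sum_congr rfl fun j _ => sum_congr rfl fun i _ => by ring
  have ha_sq : ∑ i ∈ range n, a i ^ 2 ≤ n :=
    (sum_le_sum fun i hi => (sq_le_one_iff_abs_le_one _).2 (ha i (mem_range.1 hi))).trans
      (by simp)
  calc _ = |∑ j ∈ range (2 ^ n), b j * ∑ i ∈ range n, a i * bitSign i j| := by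
        rw [← hswap]; rfl
    _ ≤ √(2 ^ n * (2 ^ n * ∑ i ∈ range n, a i ^ 2)) := by
        have := abs_sum_mul_le_sqrt_card_mul_sum_sq (range (2 ^ n)) b
          (fun j => ∑ i ∈ range n, a i * bitSign i j) fun j hj => hb j (mem_range.1 hj)
        rwa [sum_sq_sum_mul_bitSign, card_range, Nat.cast_pow, Nat.cast_two] at this
    _ ≤ √(2 ^ n * (2 ^ n * n)) := by gcongr
    _ = 2 ^ n * √n := by
        rw [← mul_assoc, Real.sqrt_mul (by positivity), Real.sqrt_mul_self (by positivity)]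
end

section
/- Suppose sequences of random elements (X_n) in E_1 and (Y_n) in E_2 satisfy: for all measurable A ⊆ E_1, B ⊆ E_2, |P{X_n ∈ A, Y_n ∈ B} − P{X_n ∈ A}P{Y_n ∈ B}| → 0 (condition AI-2). Then for all bounded uniformly continuous f : E_1 → ℝ and g : E_2 → ℝ, E[f(X_n)g(Y_n)] − E[f(X_n)]·E[g(Y_n)] → 0 (condition AI-0). -/
/-!
Covariance is bilinear, and for indicators of measurable sets the covariance of `1_A(Xₙ)` and
`1_B(Yₙ)` is exactly the quantity in AI-2; hence AI-2 extends to all simple functions.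
A bounded measurable `f` is a uniform limit of the simple functions `δ⌊f/δ⌋`, and
`|cov[U, V]| ≤ 4 sup|U| sup|V|`, so uniformly in `n` the covariance of `f(Xₙ)` and `g(Yₙ)` is
within `O(δ)` of that of their simple approximations.
-/

open MeasureTheory Filter ProbabilityTheory Topology
open scoped ENNReal

section Covariance

variable {Ω : Type*} [MeasurableSpace Ω] {μ : Measure Ω} [IsProbabilityMeasure μ]

lemma abs_integral_le_of_abs_le {W : Ω → ℝ} {c : ℝ} (hW : ∀ ω, |W ω| ≤ c) : |μ[W]| ≤ c := by
  simpa using norm_integral_le_of_norm_le_const (μ := μ)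
    (ae_of_all _ fun ω => (Real.norm_eq_abs (W ω)).trans_le (hW ω))

lemma abs_covariance_le {U V : Ω → ℝ} {a b : ℝ} (hU : ∀ ω, |U ω| ≤ a) (hV : ∀ ω, |V ω| ≤ b) :
    |cov[U, V; μ]| ≤ 4 * a * b := by
  have hcentered : ∀ {W : Ω → ℝ} {c : ℝ}, (∀ ω, |W ω| ≤ c) → ∀ ω, |W ω - μ[W]| ≤ 2 * c :=
    fun hW ω => (abs_sub _ _).trans (by linarith [hW ω, abs_integral_le_of_abs_le (μ := μ) hW])
  have hprod : ∀ ω, |(U ω - μ[U]) * (V ω - μ[V])| ≤ 4 * a * b := fun ω => by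
    rw [abs_mul]
    nlinarith [hcentered hU ω, hcentered hV ω, abs_nonneg (U ω - μ[U]), abs_nonneg (V ω - μ[V])]
  exact abs_integral_le_of_abs_le hprod

lemma covariance_indicator_one {S T : Set Ω} (hS : MeasurableSet S) (hT : MeasurableSet T) :
    cov[S.indicator 1, T.indicator 1; μ] = μ.real (S ∩ T) - μ.real S * μ.real T := by
  have hmemLp : ∀ {R : Set Ω}, MeasurableSet R → MemLp (R.indicator 1) 2 μ := fun hR =>
    memLp_indicator_const 2 hR (1 : ℝ) (Or.inr (measure_ne_top μ _))
  rw [covariance_eq_sub (hmemLp hS) (hmemLp hT), ← Set.inter_indicator_one,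
    integral_indicator_one (hS.inter hT), integral_indicator_one hS, integral_indicator_one hT]

lemma abs_covariance_sub_covariance_le {U U' V V' : Ω → ℝ} (hU : MemLp U 2 μ) (hU' : MemLp U' 2 μ)
    (hV : MemLp V 2 μ) (hV' : MemLp V' 2 μ) {C D δ : ℝ} (hUC : ∀ ω, |U ω| ≤ C)
    (hV'D : ∀ ω, |V' ω| ≤ D) (hUU' : ∀ ω, |U ω - U' ω| ≤ δ) (hVV' : ∀ ω, |V ω - V' ω| ≤ δ) :
    |cov[U, V; μ] - cov[U', V'; μ]| ≤ 4 * δ * (C + D) := by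
  have hsplit : cov[U, V; μ] - cov[U', V'; μ] = cov[U, V - V'; μ] + cov[U - U', V'; μ] := by
    rw [covariance_sub_right hU hV hV', covariance_sub_left hU hU' hV']
    ring
  calc |cov[U, V; μ] - cov[U', V'; μ]|
      ≤ |cov[U, V - V'; μ]| + |cov[U - U', V'; μ]| := hsplit ▸ abs_add_le _ _
    _ ≤ 4 * C * δ + 4 * δ * D :=
      add_le_add (abs_covariance_le hUC hVV') (abs_covariance_le hUU' hV'D)
    _ = 4 * δ * (C + D) := by ring

end Covariance

lemma tendsto_zero_of_forall_abs_sub_le {α : Type*} {l : Filter α} {u : α → ℝ}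
    (h : ∀ ε > 0, ∃ v : α → ℝ, Tendsto v l (𝓝 0) ∧ ∀ a, |u a - v a| ≤ ε) :
    Tendsto u l (𝓝 0) := by
  refine Metric.tendsto_nhds.mpr fun ε hε => ?_
  obtain ⟨v, hv, huv⟩ := h (ε / 2) (half_pos hε)
  filter_upwards [Metric.tendsto_nhds.mp hv (ε / 2) (half_pos hε)] with a ha
  rw [Real.dist_0_eq_abs] at ha ⊢
  linarith [abs_sub_abs_le_abs_sub (u a) (v a), huv a]

lemma exists_simpleFunc_abs_sub_le {E : Type*} [MeasurableSpace E] {f : E → ℝ} (hf : Measurable f)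
    {C : ℝ} (hC : ∀ x, |f x| ≤ C) {δ : ℝ} (hδ : 0 < δ) :
    ∃ s : SimpleFunc E ℝ, ∀ x, |f x - s x| ≤ δ := by
  have hfin : (Set.range fun x => ⌊f x / δ⌋).Finite :=
    (Set.finite_Icc ⌊-C / δ⌋ ⌊C / δ⌋).subset <| by
      rintro _ ⟨x, rfl⟩
      obtain ⟨hlow, hup⟩ := abs_le.mp (hC x)
      exact ⟨Int.floor_mono (div_le_div_of_nonneg_right hlow hδ.le),
        Int.floor_mono (div_le_div_of_nonneg_right hup hδ.le)⟩
  let q : SimpleFunc E ℤ :=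
    ⟨fun x => ⌊f x / δ⌋, fun k => (hf.div_const δ).floor (measurableSet_singleton k), hfin⟩
  refine ⟨q.map fun k : ℤ => δ * (k : ℝ), fun x => ?_⟩
  have hfract : f x - δ * ⌊f x / δ⌋ = δ * Int.fract (f x / δ) := by
    rw [Int.fract, mul_sub, mul_div_cancel₀ _ hδ.ne']
  change |f x - δ * ⌊f x / δ⌋| ≤ δ
  rw [hfract, abs_of_nonneg (mul_nonneg hδ.le (Int.fract_nonneg _))]
  exact mul_le_of_le_one_right hδ.le (Int.fract_lt_one _).le

lemma indicator_const_comp_eq_smul {α β : Type*} (Z : α → β) (S : Set β) (c : ℝ) :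
    S.indicator (fun _ => c) ∘ Z = c • (Z ⁻¹' S).indicator 1 := by
  ext a
  by_cases ha : Z a ∈ S <;> simp [ha]

section RandomElements

variable {Ω E₁ E₂ : Type*} [MeasurableSpace Ω] [MeasurableSpace E₁] [MeasurableSpace E₂]
  {μ : Measure Ω} [IsProbabilityMeasure μ]

lemma memLp_comp_of_abs_le {X : Ω → E₁} (hX : Measurable X) {f : E₁ → ℝ} (hf : Measurable f)
    {C : ℝ} (hC : ∀ x, |f x| ≤ C) (p : ℝ≥0∞) : MemLp (f ∘ X) p μ :=
  MemLp.of_bound (hf.comp hX).aestronglyMeasurable C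
    (ae_of_all _ fun ω => (Real.norm_eq_abs _).trans_le (hC (X ω)))

lemma memLp_simpleFunc_comp {X : Ω → E₁} (hX : Measurable X) (s : SimpleFunc E₁ ℝ) (p : ℝ≥0∞) :
    MemLp (s ∘ X) p μ :=
  (s.comp X hX).memLp_of_isFiniteMeasure p μ

lemma covariance_indicator_const_comp {X : Ω → E₁} {Y : Ω → E₂} (hX : Measurable X)
    (hY : Measurable Y) {A : Set E₁} {B : Set E₂} (hA : MeasurableSet A) (hB : MeasurableSet B)
    (c d : ℝ) :
    cov[A.indicator (fun _ => c) ∘ X, B.indicator (fun _ => d) ∘ Y; μ]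
      = c * d * (μ.real {ω | X ω ∈ A ∧ Y ω ∈ B}
          - μ.real {ω | X ω ∈ A} * μ.real {ω | Y ω ∈ B}) := by
  rw [indicator_const_comp_eq_smul, indicator_const_comp_eq_smul, covariance_smul_left,
    covariance_smul_right, covariance_indicator_one (hX hA) (hY hB), mul_assoc]
  rfl

/-- Condition AI-2. -/
def AsymptoticallyIndependent (μ : Measure Ω) (X : ℕ → Ω → E₁) (Y : ℕ → Ω → E₂) : Prop :=
  ∀ A : Set E₁, ∀ B : Set E₂, MeasurableSet A → MeasurableSet B →
    Tendsto (fun n => μ.real {ω | X n ω ∈ A ∧ Y n ω ∈ B}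
      - μ.real {ω | X n ω ∈ A} * μ.real {ω | Y n ω ∈ B}) atTop (𝓝 0)

namespace AsymptoticallyIndependent

variable {X : ℕ → Ω → E₁} {Y : ℕ → Ω → E₂}

lemma tendsto_covariance_simpleFunc_comp (h : AsymptoticallyIndependent μ X Y)
    (hX : ∀ n, Measurable (X n)) (hY : ∀ n, Measurable (Y n)) (s : SimpleFunc E₁ ℝ)
    (t : SimpleFunc E₂ ℝ) :
    Tendsto (fun n => cov[s ∘ X n, t ∘ Y n; μ]) atTop (𝓝 0) := by
  induction s using SimpleFunc.induction with
  | @const c A hA =>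
    induction t using SimpleFunc.induction with
    | @const d B hB =>
      simp only [SimpleFunc.coe_piecewise, SimpleFunc.coe_const, SimpleFunc.const_zero,
        SimpleFunc.coe_zero, Set.piecewise_eq_indicator]
      have hlim := (h A B hA hB).const_mul (c * d)
      rw [mul_zero] at hlim
      exact hlim.congr fun n => (covariance_indicator_const_comp (hX n) (hY n) hA hB c d).symm
    | add _ ht₁ ht₂ =>
      refine (add_zero (0 : ℝ) ▸ ht₁.add ht₂).congr fun n => ?_
      rw [SimpleFunc.coe_add, Pi.add_comp,
        covariance_add_right (memLp_simpleFunc_comp (hX n) _ 2)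
          (memLp_simpleFunc_comp (hY n) _ 2) (memLp_simpleFunc_comp (hY n) _ 2)]
  | add _ hs₁ hs₂ =>
    refine (add_zero (0 : ℝ) ▸ hs₁.add hs₂).congr fun n => ?_
    rw [SimpleFunc.coe_add, Pi.add_comp, covariance_add_left (memLp_simpleFunc_comp (hX n) _ 2)
      (memLp_simpleFunc_comp (hX n) _ 2) (memLp_simpleFunc_comp (hY n) _ 2)]

theorem tendsto_covariance_comp (h : AsymptoticallyIndependent μ X Y)
    (hX : ∀ n, Measurable (X n)) (hY : ∀ n, Measurable (Y n)) {f : E₁ → ℝ} {g : E₂ → ℝ}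
    (hf : Measurable f) (hg : Measurable g) {C₁ C₂ : ℝ} (hC₁ : ∀ x, |f x| ≤ C₁)
    (hC₂ : ∀ y, |g y| ≤ C₂) :
    Tendsto (fun n => cov[f ∘ X n, g ∘ Y n; μ]) atTop (𝓝 0) := by
  refine tendsto_zero_of_forall_abs_sub_le fun ε hε => ?_
  obtain ⟨δ, hδ, hδε⟩ : ∃ δ > 0, 4 * δ * (C₁ + (C₂ + δ)) ≤ ε := by
    set K := |C₁| + |C₂| + 1
    set δ := min 1 (ε / (4 * K))
    have hδ : 0 < δ := by positivity
    have hδK : δ * (4 * K) ≤ ε := (le_div_iff₀ (by positivity)).mp (min_le_right _ _)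
    have hCK : C₁ + (C₂ + δ) ≤ K := by
      linarith [le_abs_self C₁, le_abs_self C₂, min_le_left 1 (ε / (4 * K))]
    exact ⟨δ, hδ, by nlinarith⟩
  obtain ⟨s, hs⟩ := exists_simpleFunc_abs_sub_le hf hC₁ hδ
  obtain ⟨t, ht⟩ := exists_simpleFunc_abs_sub_le hg hC₂ hδ
  have htC₂ : ∀ y, |t y| ≤ C₂ + δ := fun y => by
    linarith [abs_sub_abs_le_abs_sub (t y) (g y), abs_sub_comm (t y) (g y), hC₂ y, ht y]
  refine ⟨_, h.tendsto_covariance_simpleFunc_comp hX hY s t, fun n => ?_⟩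
  exact (abs_covariance_sub_covariance_le (memLp_comp_of_abs_le (hX n) hf hC₁ 2)
    (memLp_simpleFunc_comp (hX n) s 2) (memLp_comp_of_abs_le (hY n) hg hC₂ 2)
    (memLp_simpleFunc_comp (hY n) t 2) (fun ω => hC₁ _) (fun ω => htC₂ _) (fun ω => hs _)
    (fun ω => ht _)).trans hδε

end AsymptoticallyIndependent

end RandomElements

theorem stmt_9 {Ω E₁ E₂ : Type*} [MeasurableSpace Ω]
    [MetricSpace E₁] [MeasurableSpace E₁] [BorelSpace E₁]
    [MetricSpace E₂] [MeasurableSpace E₂] [BorelSpace E₂]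
    (P : Measure Ω) [IsProbabilityMeasure P]
    (X : ℕ → Ω → E₁) (Y : ℕ → Ω → E₂)
    (hX : ∀ n, Measurable (X n)) (hY : ∀ n, Measurable (Y n))
    (hAI2 : ∀ A : Set E₁, ∀ B : Set E₂, MeasurableSet A → MeasurableSet B →
      Tendsto (fun n =>
          (P {ω | X n ω ∈ A ∧ Y n ω ∈ B}).toReal
            - (P {ω | X n ω ∈ A}).toReal * (P {ω | Y n ω ∈ B}).toReal)
        atTop (nhds 0)) :
    ∀ f : E₁ → ℝ, ∀ g : E₂ → ℝ,
      UniformContinuous f → UniformContinuous g →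
      (∃ C, ∀ x, |f x| ≤ C) → (∃ C, ∀ y, |g y| ≤ C) →
      Tendsto (fun n =>
          (∫ ω, f (X n ω) * g (Y n ω) ∂P)
            - (∫ ω, f (X n ω) ∂P) * (∫ ω, g (Y n ω) ∂P))
        atTop (nhds 0) := by
  rintro f g hf hg ⟨C₁, hC₁⟩ ⟨C₂, hC₂⟩
  have hAI : AsymptoticallyIndependent P X Y := hAI2
  have hfm := hf.continuous.measurable
  have hgm := hg.continuous.measurable
  refine (hAI.tendsto_covariance_comp hX hY hfm hgm hC₁ hC₂).congr fun n => ?_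
  rw [covariance_eq_sub (memLp_comp_of_abs_le (hX n) hfm hC₁ 2)
    (memLp_comp_of_abs_le (hY n) hgm hC₂ 2)]
  rfl
end

section
/- Let (P_n), (Q_n), (L_n) be probability measures on Polish spaces E_1, E_2 and E_1 × E_2 respectively, with P_n ⇒ P, Q_n ⇒ Q, L_n ⇒ L weakly. If for all bounded uniformly continuous f : E_1 → ℝ and g : E_2 → ℝ, ∫ f(x)g(y) dL_n − (∫ f dP_n)(∫ g dQ_n) → 0, then L = P × Q. -/
open MeasureTheory Filter BoundedContinuousFunction Metric Set

noncomputable def stmt15Appr {α : Type*} [MetricSpace α] (δ : ℝ) (F : Set α) (x : α) : ℝ :=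
  max 0 (1 - infDist x F / δ)

lemma stmt15Appr_nonneg {α : Type*} [MetricSpace α] (δ : ℝ) (F : Set α) (x : α) :
    0 ≤ stmt15Appr δ F x := le_max_left _ _

lemma stmt15Appr_le_one {α : Type*} [MetricSpace α] {δ : ℝ} (hδ : 0 < δ) (F : Set α) (x : α) :
    stmt15Appr δ F x ≤ 1 :=
  max_le zero_le_one (by
    have : 0 ≤ infDist x F / δ := div_nonneg infDist_nonneg hδ.le
    linarith)

lemma stmt15Appr_uc {α : Type*} [MetricSpace α] (δ : ℝ) (F : Set α) :
    UniformContinuous (stmt15Appr δ F) := by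
  have h1 : UniformContinuous fun x : α => infDist x F := uniformContinuous_infDist_pt F
  have h2 : UniformContinuous fun x : α => 1 - infDist x F / δ :=
    uniformContinuous_const.sub (h1.div_const' δ)
  exact lipschitzWith_max.uniformContinuous.comp (uniformContinuous_const.prodMk h2)

lemma stmt15Appr_of_mem {α : Type*} [MetricSpace α] (δ : ℝ) {F : Set α} {x : α} (hx : x ∈ F) :
    stmt15Appr δ F x = 1 := by
  simp [stmt15Appr, infDist_zero_of_mem hx]

lemma stmt15Appr_tendsto {α : Type*} [MetricSpace α] {F : Set α} (hF : IsClosed F)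
    (hne : F.Nonempty) (x : α) :
    Tendsto (fun n : ℕ => stmt15Appr ((n + 1 : ℝ)⁻¹) F x) atTop
      (nhds (F.indicator (fun _ => (1 : ℝ)) x)) := by
  by_cases hx : x ∈ F
  · simp only [indicator_of_mem hx]
    simp only [stmt15Appr_of_mem _ hx]
    exact tendsto_const_nhds
  · simp only [indicator_of_notMem hx]
    have hpos : 0 < infDist x F := (hF.notMem_iff_infDist_pos hne).mp hx
    have : ∀ᶠ n : ℕ in atTop, stmt15Appr ((n + 1 : ℝ)⁻¹) F x = 0 := by
      obtain ⟨N, hN⟩ := exists_nat_gt (infDist x F)⁻¹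
      filter_upwards [eventually_ge_atTop N] with n hn
      have hδ : (0:ℝ) < (n + 1 : ℝ)⁻¹ := by positivity
      have h1 : (infDist x F)⁻¹ < n + 1 := lt_of_lt_of_le hN (by exact_mod_cast Nat.le_succ_of_le hn)
      have h2 : (n + 1 : ℝ)⁻¹ < infDist x F := by
        rw [inv_lt_comm₀ (by positivity) hpos] at *
        · exact h1
      have : 1 ≤ infDist x F / (n + 1 : ℝ)⁻¹ := by
        rw [le_div_iff₀ hδ]; linarith
      simp only [stmt15Appr]
      rw [max_eq_left]
      linarith
    exact Tendsto.congr' (this.mono fun n h => h.symm) tendsto_const_nhds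

theorem stmt_15 {E₁ E₂ : Type*}
    [MetricSpace E₁] [CompleteSpace E₁] [SecondCountableTopology E₁]
    [MeasurableSpace E₁] [BorelSpace E₁]
    [MetricSpace E₂] [CompleteSpace E₂] [SecondCountableTopology E₂]
    [MeasurableSpace E₂] [BorelSpace E₂]
    (Pn : ℕ → Measure E₁) (Qn : ℕ → Measure E₂) (Ln : ℕ → Measure (E₁ × E₂))
    (P : Measure E₁) (Q : Measure E₂) (L : Measure (E₁ × E₂))
    [∀ n, IsProbabilityMeasure (Pn n)] [∀ n, IsProbabilityMeasure (Qn n)]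
    [∀ n, IsProbabilityMeasure (Ln n)]
    [IsProbabilityMeasure P] [IsProbabilityMeasure Q] [IsProbabilityMeasure L]
    (hP : ∀ f : E₁ →ᵇ ℝ,
      Tendsto (fun n => ∫ x, f x ∂(Pn n)) atTop (nhds (∫ x, f x ∂P)))
    (hQ : ∀ g : E₂ →ᵇ ℝ,
      Tendsto (fun n => ∫ y, g y ∂(Qn n)) atTop (nhds (∫ y, g y ∂Q)))
    (hL : ∀ h : (E₁ × E₂) →ᵇ ℝ,
      Tendsto (fun n => ∫ z, h z ∂(Ln n)) atTop (nhds (∫ z, h z ∂L)))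
    (hAI : ∀ f : E₁ → ℝ, ∀ g : E₂ → ℝ,
      UniformContinuous f → UniformContinuous g →
      (∃ C, ∀ x, |f x| ≤ C) → (∃ C, ∀ y, |g y| ≤ C) →
      Tendsto (fun n =>
          (∫ z : E₁ × E₂, f z.1 * g z.2 ∂(Ln n))
            - (∫ x, f x ∂(Pn n)) * (∫ y, g y ∂(Qn n)))
        atTop (nhds 0)) :
    L = P.prod Q := by
  -- Step A: factorization of integrals of products against the limit measures
  have keyA : ∀ (f : E₁ → ℝ) (g : E₂ → ℝ), UniformContinuous f → UniformContinuous g →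
      (∀ x, |f x| ≤ 1) → (∀ y, |g y| ≤ 1) →
      ∫ z : E₁ × E₂, f z.1 * g z.2 ∂L = (∫ x, f x ∂P) * (∫ y, g y ∂Q) := by
    intro f g hf hg hfb hgb
    let fb : E₁ →ᵇ ℝ := BoundedContinuousFunction.ofNormedAddCommGroup f hf.continuous 1
        (fun x => by simpa [Real.norm_eq_abs] using hfb x)
    let gb : E₂ →ᵇ ℝ := BoundedContinuousFunction.ofNormedAddCommGroup g hg.continuous 1
        (fun y => by simpa [Real.norm_eq_abs] using hgb y)
    let hb : (E₁ × E₂) →ᵇ ℝ :=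
      (fb.compContinuous ⟨Prod.fst, continuous_fst⟩) *
        (gb.compContinuous ⟨Prod.snd, continuous_snd⟩)
    have efb : ⇑fb = f := rfl
    have egb : ⇑gb = g := rfl
    have ehb : ⇑hb = fun z : E₁ × E₂ => f z.1 * g z.2 := rfl
    have t1 := hL hb
    rw [ehb] at t1
    have t2 := (hP fb).mul (hQ gb)
    rw [efb] at t2
    rw [egb] at t2
    have t3 := hAI f g hf hg ⟨1, hfb⟩ ⟨1, hgb⟩
    have t4 := t3.add t2
    simp only [sub_add_cancel, zero_add] at t4
    exact tendsto_nhds_unique t1 t4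
  -- Step B: value on closed rectangles
  have keyB : ∀ (F₁ : Set E₁) (F₂ : Set E₂), IsClosed F₁ → IsClosed F₂ →
      L (F₁ ×ˢ F₂) = P F₁ * Q F₂ := by
    intro F₁ F₂ hF₁ hF₂
    rcases F₁.eq_empty_or_nonempty with rfl | hne₁
    · simp
    rcases F₂.eq_empty_or_nonempty with rfl | hne₂
    · simp
    have hδ : ∀ n : ℕ, (0:ℝ) < (n + 1 : ℝ)⁻¹ := fun n => by positivity
    set φ : ℕ → E₁ → ℝ := fun n => stmt15Appr ((n + 1 : ℝ)⁻¹) F₁ with hφ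
    set ψ : ℕ → E₂ → ℝ := fun n => stmt15Appr ((n + 1 : ℝ)⁻¹) F₂ with hψ
    have hφb : ∀ n x, |φ n x| ≤ 1 := fun n x => by
      rw [abs_of_nonneg (stmt15Appr_nonneg _ _ _)]; exact stmt15Appr_le_one (hδ n) _ _
    have hψb : ∀ n y, |ψ n y| ≤ 1 := fun n y => by
      rw [abs_of_nonneg (stmt15Appr_nonneg _ _ _)]; exact stmt15Appr_le_one (hδ n) _ _
    have tP : Tendsto (fun n => ∫ x, φ n x ∂P) atTop (nhds (P F₁).toReal) := by
      have := tendsto_integral_of_dominated_convergence (μ := P) (bound := fun _ => (1:ℝ))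
        (F := fun n => φ n) (f := F₁.indicator (fun _ => (1:ℝ)))
        (fun n => ((stmt15Appr_uc _ _).continuous.aestronglyMeasurable))
        (integrable_const 1)
        (fun n => Eventually.of_forall fun x => by
          rw [Real.norm_eq_abs]; exact hφb n x)
        (Eventually.of_forall fun x => stmt15Appr_tendsto hF₁ hne₁ x)
      have hI : (∫ a, F₁.indicator (fun _ => (1:ℝ)) a ∂P) = (P F₁).toReal :=
        integral_indicator_one hF₁.measurableSet
      rw [hI] at this
      exact this
    have tQ : Tendsto (fun n => ∫ y, ψ n y ∂Q) atTop (nhds (Q F₂).toReal) := by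
      have := tendsto_integral_of_dominated_convergence (μ := Q) (bound := fun _ => (1:ℝ))
        (F := fun n => ψ n) (f := F₂.indicator (fun _ => (1:ℝ)))
        (fun n => ((stmt15Appr_uc _ _).continuous.aestronglyMeasurable))
        (integrable_const 1)
        (fun n => Eventually.of_forall fun y => by
          rw [Real.norm_eq_abs]; exact hψb n y)
        (Eventually.of_forall fun y => stmt15Appr_tendsto hF₂ hne₂ y)
      have hI : (∫ a, F₂.indicator (fun _ => (1:ℝ)) a ∂Q) = (Q F₂).toReal :=
        integral_indicator_one hF₂.measurableSet
      rw [hI] at this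
      exact this
    have ind_eq : ∀ z : E₁ × E₂,
        F₁.indicator (fun _ => (1:ℝ)) z.1 * F₂.indicator (fun _ => (1:ℝ)) z.2
          = (F₁ ×ˢ F₂).indicator (fun _ => (1:ℝ)) z := by
      intro z
      by_cases h1 : z.1 ∈ F₁ <;> by_cases h2 : z.2 ∈ F₂ <;>
        simp [Set.indicator_apply, h1, h2, Set.mem_prod]
    have tL : Tendsto (fun n => ∫ z : E₁ × E₂, φ n z.1 * ψ n z.2 ∂L) atTop
        (nhds (L (F₁ ×ˢ F₂)).toReal) := by
      have := tendsto_integral_of_dominated_convergence (μ := L) (bound := fun _ => (1:ℝ))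
        (F := fun n => fun z : E₁ × E₂ => φ n z.1 * ψ n z.2)
        (f := (F₁ ×ˢ F₂).indicator (fun _ => (1:ℝ)))
        (fun n => (((stmt15Appr_uc _ _).continuous.comp continuous_fst).mul
          ((stmt15Appr_uc _ _).continuous.comp continuous_snd)).aestronglyMeasurable)
        (integrable_const 1)
        (fun n => Eventually.of_forall fun z => by
          rw [Real.norm_eq_abs, abs_mul]
          calc |φ n z.1| * |ψ n z.2| ≤ 1 * 1 :=
                mul_le_mul (hφb n z.1) (hψb n z.2) (abs_nonneg _) zero_le_one
            _ = 1 := one_mul 1)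
        (Eventually.of_forall fun z => by
          rw [← ind_eq z]
          exact (stmt15Appr_tendsto hF₁ hne₁ z.1).mul (stmt15Appr_tendsto hF₂ hne₂ z.2))
      have hI : (∫ a, (F₁ ×ˢ F₂).indicator (fun _ => (1:ℝ)) a ∂L) = (L (F₁ ×ˢ F₂)).toReal :=
        integral_indicator_one (hF₁.prod hF₂).measurableSet
      rw [hI] at this
      exact this
    have heq : ∀ n, ∫ z : E₁ × E₂, φ n z.1 * ψ n z.2 ∂L
        = (∫ x, φ n x ∂P) * (∫ y, ψ n y ∂Q) := fun n =>
      keyA (φ n) (ψ n) (stmt15Appr_uc _ _) (stmt15Appr_uc _ _) (hφb n) (hψb n)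
    have tL' : Tendsto (fun n => ∫ z : E₁ × E₂, φ n z.1 * ψ n z.2 ∂L) atTop
        (nhds ((P F₁).toReal * (Q F₂).toReal)) := by
      simp only [heq]
      exact tP.mul tQ
    have hreal : (L (F₁ ×ˢ F₂)).toReal = (P F₁).toReal * (Q F₂).toReal :=
      tendsto_nhds_unique tL tL'
    have h1 : (L (F₁ ×ˢ F₂)).toReal = (P F₁ * Q F₂).toReal := by
      rw [ENNReal.toReal_mul]; exact hreal
    exact (ENNReal.toReal_eq_toReal_iff' (measure_ne_top L _)
      (ENNReal.mul_ne_top (measure_ne_top P _) (measure_ne_top Q _))).mp h1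
  -- Step C: extensionality via the π-system of closed rectangles
  have hspan₁ : IsCountablySpanning {s : Set E₁ | IsClosed s} :=
    ⟨fun _ => univ, fun _ => isClosed_univ, iUnion_const _⟩
  have hspan₂ : IsCountablySpanning {t : Set E₂ | IsClosed t} :=
    ⟨fun _ => univ, fun _ => isClosed_univ, iUnion_const _⟩
  have hgen₁ : MeasurableSpace.generateFrom {s : Set E₁ | IsClosed s} = ‹MeasurableSpace E₁› := by
    rw [BorelSpace.measurable_eq (α := E₁), borel_eq_generateFrom_isClosed]
  have hgen₂ : MeasurableSpace.generateFrom {t : Set E₂ | IsClosed t} = ‹MeasurableSpace E₂› := by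
    rw [BorelSpace.measurable_eq (α := E₂), borel_eq_generateFrom_isClosed]
  refine ext_of_generate_finite
    (image2 (· ×ˢ ·) {s : Set E₁ | IsClosed s} {t : Set E₂ | IsClosed t})
    (generateFrom_eq_prod hgen₁ hgen₂ hspan₁ hspan₂).symm ?_ ?_ ?_
  · rintro _ ⟨s₁, hs₁, t₁, ht₁, rfl⟩ _ ⟨s₂, hs₂, t₂, ht₂, rfl⟩ -
    rw [prod_inter_prod]
    exact mem_image2_of_mem (hs₁.inter hs₂) (ht₁.inter ht₂)
  · rintro _ ⟨s, hs, t, ht, rfl⟩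
    rw [Measure.prod_prod]
    exact keyB s t hs ht
  · simp
end

section
/- Let X_n be ℝ^m-valued and Y_n be ℝ^k-valued random vectors such that the families of laws (P_{X_n}) and (P_{Y_n}) are tight. Then condition AI-1 (merging of P_{(X_n,Y_n)} with P_{X_n} × P_{Y_n} in the Lévy–Prokhorov metric) holds if and only if for all t ∈ ℝ^m, s ∈ ℝ^k, the characteristic functions satisfy φ_{(X_n,Y_n)}(t,s) − φ_{X_n}(t)·φ_{Y_n}(s) → 0. -/
/-!
Both conditions compare the laws `μₙ` of `(Xₙ, Yₙ)` and `νₙ = P_{Xₙ} ⊗ P_{Yₙ}`, and the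
characteristic functions of `μₙ, νₙ` at a linear form `L` are exactly the two terms of the
characteristic-function condition. Testing against `cos ∘ L` and `sin ∘ L` gives one direction.
For the other, the marginals of `μₙ` and `νₙ` are tight, hence so are both sequences; by Prokhorov
every subsequence has a further one along which `μₙ → μ` and `νₙ → ν` weakly. The limits have the
same characteristic function, so `μ = ν`, and `∫ h dμₙ - ∫ h dνₙ → 0` along it.
-/

open MeasureTheory Filter Topology BoundedContinuousFunction Complex

theorem isTightMeasureSet_range_map {Ω α : Type*} [MeasurableSpace Ω] [TopologicalSpace α]
    [MeasurableSpace α] [OpensMeasurableSpace α] [T2Space α]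
    (P : Measure Ω) [IsProbabilityMeasure P] {X : ℕ → Ω → α} (hX : ∀ n, Measurable (X n))
    (htight : ∀ ε : ℝ, 0 < ε → ∃ K : Set α, IsCompact K ∧
      ∀ n, (P {ω | X n ω ∈ K}).toReal ≥ 1 - ε) :
    IsTightMeasureSet (Set.range fun n => P.map (X n)) := by
  rw [isTightMeasureSet_iff_exists_isCompact_measure_compl_le]
  intro ε hε
  obtain ⟨r, -, hr, hrε⟩ := ENNReal.lt_iff_exists_real_btwn.mp hε
  obtain ⟨K, hK, hPK⟩ := htight r (ENNReal.ofReal_pos.mp hr)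
  refine ⟨K, hK, ?_⟩
  rintro _ ⟨n, rfl⟩
  have hn : 1 - r ≤ (P (X n ⁻¹' K)).toReal := hPK n
  rw [Measure.map_apply (hX n) hK.measurableSet.compl, Set.preimage_compl,
    prob_compl_eq_one_sub (hX n hK.measurableSet), tsub_le_iff_right]
  calc (1 : ENNReal) ≤ ENNReal.ofReal (r + (P (X n ⁻¹' K)).toReal) := by
        rw [← ENNReal.ofReal_one]; exact ENNReal.ofReal_le_ofReal (by linarith)
    _ ≤ ε + P (X n ⁻¹' K) := by
        rw [ENNReal.ofReal_add (ENNReal.ofReal_pos.mp hr).le ENNReal.toReal_nonneg,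
          ENNReal.ofReal_toReal (measure_ne_top P _)]
        gcongr

namespace MeasureTheory.IsTightMeasureSet

variable {Ω α β : Type*} [MeasurableSpace Ω] [TopologicalSpace α] [MeasurableSpace α]
  [TopologicalSpace β] [MeasurableSpace β]

theorem range_map_prodMk {P : Measure Ω} {X : ℕ → Ω → α} {Y : ℕ → Ω → β}
    (hX : ∀ n, Measurable (X n)) (hY : ∀ n, Measurable (Y n))
    (hTX : IsTightMeasureSet (Set.range fun n => P.map (X n)))
    (hTY : IsTightMeasureSet (Set.range fun n => P.map (Y n))) :
    IsTightMeasureSet (Set.range fun n => P.map fun ω => (X n ω, Y n ω)) :=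
  .prodMk
    (hTX.subset (by rintro _ ⟨_, ⟨n, rfl⟩, rfl⟩; exact ⟨n, (Measure.fst_map_prodMk (hY n)).symm⟩))
    (hTY.subset (by rintro _ ⟨_, ⟨n, rfl⟩, rfl⟩; exact ⟨n, (Measure.snd_map_prodMk (hX n)).symm⟩))

theorem range_prod {μ : ℕ → Measure α} {ν : ℕ → Measure β} [∀ n, IsProbabilityMeasure (μ n)]
    [∀ n, IsProbabilityMeasure (ν n)] (hμ : IsTightMeasureSet (Set.range μ))
    (hν : IsTightMeasureSet (Set.range ν)) :
    IsTightMeasureSet (Set.range fun n => (μ n).prod (ν n)) :=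
  .prodMk (hμ.subset (by rintro _ ⟨_, ⟨n, rfl⟩, rfl⟩; exact ⟨n, Measure.fst_prod.symm⟩))
    (hν.subset (by rintro _ ⟨_, ⟨n, rfl⟩, rfl⟩; exact ⟨n, Measure.snd_prod.symm⟩))

end MeasureTheory.IsTightMeasureSet

section CharFunDual

variable {E : Type*} [NormedAddCommGroup E] [NormedSpace ℝ E] [MeasurableSpace E]

theorem charFunDual_eq_integral_cos_add_integral_sin [OpensMeasurableSpace E] (μ : Measure E)
    [IsFiniteMeasure μ] (L : StrongDual ℝ E) :
    charFunDual μ L = ↑(∫ x, Real.cos (L x) ∂μ) + ↑(∫ x, Real.sin (L x) ∂μ) * I := by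
  have hbdd (f : ℝ → ℝ) (hf : Continuous f) (hf1 : ∀ x, |f x| ≤ 1) :
      Integrable (fun x => (f (L x) : ℂ)) μ :=
    (integrable_const 1).mono' (by fun_prop) (.of_forall fun x => by simpa using hf1 (L x))
  simp_rw [charFunDual_apply, exp_mul_I, ← ofReal_cos, ← ofReal_sin]
  rw [integral_add (hbdd _ Real.continuous_cos Real.abs_cos_le_one)
      ((hbdd _ Real.continuous_sin Real.abs_sin_le_one).mul_const I),
    integral_mul_const, integral_complex_ofReal, integral_complex_ofReal]

theorem tendsto_charFunDual_sub_of_forall_uniformContinuous [OpensMeasurableSpace E]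
    {μ ν : ℕ → Measure E} [∀ n, IsProbabilityMeasure (μ n)] [∀ n, IsProbabilityMeasure (ν n)]
    (h : ∀ f : E → ℝ, UniformContinuous f → (∃ C, ∀ x, |f x| ≤ C) →
      Tendsto (fun n => ∫ x, f x ∂μ n - ∫ x, f x ∂ν n) atTop (𝓝 0))
    (L : StrongDual ℝ E) :
    Tendsto (fun n => charFunDual (μ n) L - charFunDual (ν n) L) atTop (𝓝 0) := by
  have hcos := h (fun x => Real.cos (L x))
    (Real.lipschitzWith_cos.uniformContinuous.comp L.uniformContinuous)
    ⟨1, fun x => Real.abs_cos_le_one _⟩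
  have hsin := h (fun x => Real.sin (L x))
    (Real.lipschitzWith_sin.uniformContinuous.comp L.uniformContinuous)
    ⟨1, fun x => Real.abs_sin_le_one _⟩
  have hlim := ((continuous_ofReal.tendsto 0).comp hcos).add
    (((continuous_ofReal.tendsto 0).comp hsin).mul_const I)
  simp only [ofReal_zero, zero_mul, add_zero, Function.comp_def] at hlim
  simp_rw [charFunDual_eq_integral_cos_add_integral_sin]
  refine hlim.congr fun n => ?_
  push_cast
  ring

variable [BorelSpace E]

theorem MeasureTheory.ProbabilityMeasure.tendsto_charFunDual {ι : Type*} {l : Filter ι}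
    {μ : ι → ProbabilityMeasure E} {μ₀ : ProbabilityMeasure E} (h : Tendsto μ l (𝓝 μ₀))
    (L : StrongDual ℝ E) :
    Tendsto (fun i => charFunDual (μ i : Measure E) L) l (𝓝 (charFunDual (μ₀ : Measure E) L)) :=
  (ProbabilityMeasure.tendsto_iff_forall_integral_rclike_tendsto ℂ).mp h (probCharDual L)

theorem tendsto_integral_sub_of_tendsto_charFunDual_sub [SecondCountableTopology E]
    [CompleteSpace E] {μ ν : ℕ → Measure E} [∀ n, IsProbabilityMeasure (μ n)]
    [∀ n, IsProbabilityMeasure (ν n)]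
    (hμ : IsTightMeasureSet (Set.range μ)) (hν : IsTightMeasureSet (Set.range ν))
    (hchar : ∀ L : StrongDual ℝ E,
      Tendsto (fun n => charFunDual (μ n) L - charFunDual (ν n) L) atTop (𝓝 0))
    (f : E →ᵇ ℝ) :
    Tendsto (fun n => ∫ x, f x ∂μ n - ∫ x, f x ∂ν n) atTop (𝓝 0) := by
  let μ' (n : ℕ) : ProbabilityMeasure E := ⟨μ n, inferInstance⟩
  let ν' (n : ℕ) : ProbabilityMeasure E := ⟨ν n, inferInstance⟩
  refine tendsto_of_subseq_tendsto fun ns hns => ?_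
  have hK : IsCompact (closure (Set.range μ') ×ˢ closure (Set.range ν')) :=
    (isCompact_closure_of_isTightMeasureSet
      (hμ.subset (by rintro _ ⟨_, ⟨n, rfl⟩, rfl⟩; exact ⟨n, rfl⟩))).prod
    (isCompact_closure_of_isTightMeasureSet
      (hν.subset (by rintro _ ⟨_, ⟨n, rfl⟩, rfl⟩; exact ⟨n, rfl⟩)))
  obtain ⟨⟨μ₀, ν₀⟩, -, φ, hφ, hlim⟩ := hK.tendsto_subseq (x := fun n => (μ' (ns n), ν' (ns n)))
    fun n => ⟨subset_closure ⟨_, rfl⟩, subset_closure ⟨_, rfl⟩⟩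
  have hμ₀ : Tendsto (fun n => μ' (ns (φ n))) atTop (𝓝 μ₀) := (continuous_fst.tendsto _).comp hlim
  have hν₀ : Tendsto (fun n => ν' (ns (φ n))) atTop (𝓝 ν₀) := (continuous_snd.tendsto _).comp hlim
  have hμ₀ν₀ : μ₀ = ν₀ := by
    refine Subtype.ext (Measure.ext_of_charFunDual (μ := (μ₀ : Measure E)) (ν := ν₀)
      (funext fun L => sub_eq_zero.mp ?_))
    exact tendsto_nhds_unique
      ((ProbabilityMeasure.tendsto_charFunDual hμ₀ L).sub
        (ProbabilityMeasure.tendsto_charFunDual hν₀ L))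
      ((hchar L).comp (hns.comp hφ.tendsto_atTop))
  refine ⟨φ, ?_⟩
  have := (ProbabilityMeasure.tendsto_iff_forall_integral_tendsto.mp hμ₀ f).sub
    (ProbabilityMeasure.tendsto_iff_forall_integral_tendsto.mp hν₀ f)
  rwa [hμ₀ν₀, sub_self] at this

end CharFunDual

section Coordinates

variable {ι κ : Type*} [Fintype ι] [Fintype κ]

theorem StrongDual.exists_apply_eq_sum (L : StrongDual ℝ ((ι → ℝ) × (κ → ℝ))) :
    ∃ (t : ι → ℝ) (s : κ → ℝ), ∀ z, L z = ∑ i, t i * z.1 i + ∑ j, s j * z.2 j := by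
  classical
  refine ⟨fun i => L (fun j => if i = j then 1 else 0, 0),
    fun i => L (0, fun j => if i = j then 1 else 0), fun z => ?_⟩
  have h₁ := (L.comp (.inl ℝ _ _)).toLinearMap.pi_apply_eq_sum_univ z.1
  have h₂ := (L.comp (.inr ℝ _ _)).toLinearMap.pi_apply_eq_sum_univ z.2
  rw [← L.comp_inl_add_comp_inr]
  simp_all [mul_comm]

theorem exists_strongDual_apply_eq_sum (t : ι → ℝ) (s : κ → ℝ) :
    ∃ L : StrongDual ℝ ((ι → ℝ) × (κ → ℝ)), ∀ z, L z = ∑ i, t i * z.1 i + ∑ j, s j * z.2 j :=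
  ⟨(∑ i, t i • ContinuousLinearMap.proj i).coprod (∑ j, s j • ContinuousLinearMap.proj j),
    fun z => by simp⟩

theorem charFunDual_map_prodMk_sub_charFunDual_prod {Ω : Type*} [MeasurableSpace Ω]
    (P : Measure Ω) [IsProbabilityMeasure P] {X : Ω → ι → ℝ} {Y : Ω → κ → ℝ}
    (hX : Measurable X) (hY : Measurable Y) {L : StrongDual ℝ ((ι → ℝ) × (κ → ℝ))}
    {t : ι → ℝ} {s : κ → ℝ} (hL : ∀ z, L z = ∑ i, t i * z.1 i + ∑ j, s j * z.2 j) :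
    charFunDual (P.map fun ω => (X ω, Y ω)) L - charFunDual ((P.map X).prod (P.map Y)) L
      = (∫ ω, exp (I * ((∑ i, t i * X ω i + ∑ j, s j * Y ω j : ℝ) : ℂ)) ∂P)
        - (∫ ω, exp (I * ((∑ i, t i * X ω i : ℝ) : ℂ)) ∂P)
          * (∫ ω, exp (I * ((∑ j, s j * Y ω j : ℝ) : ℂ)) ∂P) := by
  have : IsProbabilityMeasure (P.map X) := Measure.isProbabilityMeasure_map hX.aemeasurable
  have : IsProbabilityMeasure (P.map Y) := Measure.isProbabilityMeasure_map hY.aemeasurable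
  rw [charFunDual_prod, charFunDual_apply, charFunDual_apply, charFunDual_apply,
    integral_map (hX.prodMk hY).aemeasurable (by fun_prop),
    integral_map hX.aemeasurable (by fun_prop), integral_map hY.aemeasurable (by fun_prop)]
  simp [hL, mul_comm]

theorem forall_tendsto_charFunDual_sub_iff {Ω : Type*} [MeasurableSpace Ω] (P : Measure Ω)
    [IsProbabilityMeasure P] {X : ℕ → Ω → ι → ℝ} {Y : ℕ → Ω → κ → ℝ}
    (hX : ∀ n, Measurable (X n)) (hY : ∀ n, Measurable (Y n)) :
    (∀ L : StrongDual ℝ ((ι → ℝ) × (κ → ℝ)), Tendsto (fun n =>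
        charFunDual (P.map fun ω => (X n ω, Y n ω)) L
          - charFunDual ((P.map (X n)).prod (P.map (Y n))) L) atTop (𝓝 0))
      ↔ ∀ (t : ι → ℝ) (s : κ → ℝ), Tendsto (fun n =>
        (∫ ω, exp (I * ((∑ i, t i * X n ω i + ∑ j, s j * Y n ω j : ℝ) : ℂ)) ∂P)
          - (∫ ω, exp (I * ((∑ i, t i * X n ω i : ℝ) : ℂ)) ∂P)
            * (∫ ω, exp (I * ((∑ j, s j * Y n ω j : ℝ) : ℂ)) ∂P)) atTop (𝓝 0) := by
  constructor
  · intro h t s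
    obtain ⟨L, hL⟩ := exists_strongDual_apply_eq_sum t s
    exact (h L).congr fun n => charFunDual_map_prodMk_sub_charFunDual_prod P (hX n) (hY n) hL
  · intro h L
    obtain ⟨t, s, hL⟩ := L.exists_apply_eq_sum
    exact (h t s).congr fun n =>
      (charFunDual_map_prodMk_sub_charFunDual_prod P (hX n) (hY n) hL).symm

end Coordinates

theorem stmt_16 {Ω : Type*} [MeasurableSpace Ω]
    (P : Measure Ω) [IsProbabilityMeasure P] (m k : ℕ)
    (X : ℕ → Ω → (Fin m → ℝ)) (Y : ℕ → Ω → (Fin k → ℝ))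
    (hX : ∀ n, Measurable (X n)) (hY : ∀ n, Measurable (Y n))
    (htightX : ∀ ε : ℝ, 0 < ε → ∃ K : Set (Fin m → ℝ), IsCompact K ∧
      ∀ n, (P {ω | X n ω ∈ K}).toReal ≥ 1 - ε)
    (htightY : ∀ ε : ℝ, 0 < ε → ∃ K : Set (Fin k → ℝ), IsCompact K ∧
      ∀ n, (P {ω | Y n ω ∈ K}).toReal ≥ 1 - ε) :
    (∀ h : (Fin m → ℝ) × (Fin k → ℝ) → ℝ,
      UniformContinuous h → (∃ C, ∀ z, |h z| ≤ C) →
      Tendsto (fun n =>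
          (∫ ω, h (X n ω, Y n ω) ∂P)
            - ∫ z, h z ∂((P.map (X n)).prod (P.map (Y n))))
        atTop (nhds 0))
    ↔ (∀ t : Fin m → ℝ, ∀ s : Fin k → ℝ,
      Tendsto (fun n =>
          (∫ ω, Complex.exp (Complex.I * ((∑ i, t i * X n ω i
              + ∑ j, s j * Y n ω j : ℝ) : ℂ)) ∂P)
            - (∫ ω, Complex.exp (Complex.I * ((∑ i, t i * X n ω i : ℝ) : ℂ)) ∂P)
              * (∫ ω, Complex.exp (Complex.I * ((∑ j, s j * Y n ω j : ℝ) : ℂ)) ∂P))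
        atTop (nhds 0)) := by
  let μ (n : ℕ) := P.map fun ω => (X n ω, Y n ω)
  let ν (n : ℕ) := (P.map (X n)).prod (P.map (Y n))
  have : ∀ n, IsProbabilityMeasure (P.map (X n)) :=
    fun n => Measure.isProbabilityMeasure_map (hX n).aemeasurable
  have : ∀ n, IsProbabilityMeasure (P.map (Y n)) :=
    fun n => Measure.isProbabilityMeasure_map (hY n).aemeasurable
  have : ∀ n, IsProbabilityMeasure (μ n) :=
    fun n => Measure.isProbabilityMeasure_map ((hX n).prodMk (hY n)).aemeasurable
  have hTX := isTightMeasureSet_range_map P hX htightX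
  have hTY := isTightMeasureSet_range_map P hY htightY
  have hμ : IsTightMeasureSet (Set.range μ) := hTX.range_map_prodMk hX hY hTY
  have hν : IsTightMeasureSet (Set.range ν) := hTX.range_prod hTY
  have hjoint (h : (Fin m → ℝ) × (Fin k → ℝ) → ℝ) (hh : Continuous h) (n : ℕ) :
      ∫ ω, h (X n ω, Y n ω) ∂P = ∫ z, h z ∂μ n :=
    (integral_map ((hX n).prodMk (hY n)).aemeasurable hh.aestronglyMeasurable).symm
  rw [← forall_tendsto_charFunDual_sub_iff P hX hY]
  constructor
  · intro hmerge
    exact tendsto_charFunDual_sub_of_forall_uniformContinuous (μ := μ) (ν := ν)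
      fun h hh hC => (hmerge h hh hC).congr fun n => by rw [hjoint h hh.continuous]
  · rintro hchar h hh ⟨C, hC⟩
    refine (tendsto_integral_sub_of_tendsto_charFunDual_sub hμ hν hchar
      (ofNormedAddCommGroup h hh.continuous C hC)).congr fun n => ?_
    rw [hjoint h hh.continuous]
    rfl
end

section
/- Suppose (X_n) in E_1 and (Y_n) in E_2 are random elements of Polish spaces such that the families (P_{X_n}) and (P_{Y_n}) are tight. If (X_n, Y_n) satisfy AI-0 (E[f(X_n)g(Y_n)] − E f(X_n)·E g(Y_n) → 0 for all bounded uniformly continuous f, g), then they satisfy AI-1: for all bounded uniformly continuous h : E_1 × E_2 → ℝ, E h(X_n, Y_n) − ∫ h d(P_{X_n} × P_{Y_n}) → 0. -/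
/-!
Choose compact `K₁`, `K₂` carrying mass `≥ 1 - ε` under every law of `X n`, resp. `Y n`. On
`K₁ × K₂`, Stone–Weierstrass approximates `h` by a finite sum `∑ fᵢ ⊗ gᵢ` of bounded uniformly
continuous functions, and multiplying `fᵢ`, `gᵢ` by cutoffs makes the sum bounded by
`sup |h| + 1` everywhere. The approximation error is then `O(ε)` under both the joint law and the
product of the marginals, uniformly in `n`, while for the sum itself the difference of the two
integrals is a finite sum of the AI-0 covariances, which tends to zero.
-/

open MeasureTheory Filter

open Metric Set Topology

def BoundedUniformContinuous {α : Type*} [UniformSpace α] (f : α → ℝ) : Prop :=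
  UniformContinuous f ∧ ∃ C, ∀ x, |f x| ≤ C

namespace BoundedUniformContinuous

variable {α β : Type*} [UniformSpace α] [UniformSpace β] {f g : α → ℝ}

theorem const (c : ℝ) : BoundedUniformContinuous fun _ : α => c :=
  ⟨uniformContinuous_const, |c|, fun _ => le_rfl⟩

theorem comp {φ : β → α} (hf : BoundedUniformContinuous f) (hφ : UniformContinuous φ) :
    BoundedUniformContinuous (f ∘ φ) :=
  ⟨hf.1.comp hφ, hf.2.imp fun _ hC x => hC (φ x)⟩

theorem mul (hf : BoundedUniformContinuous f) (hg : BoundedUniformContinuous g) :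
    BoundedUniformContinuous fun x => f x * g x := by
  obtain ⟨hfu, Cf, hCf⟩ := hf
  obtain ⟨hgu, Cg, hCg⟩ := hg
  have hbdd : Bornology.IsBounded (range fun x => (f x, g x)) := by
    refine isBounded_iff_forall_norm_le.2 ⟨max Cf Cg, ?_⟩
    rintro _ ⟨x, rfl⟩
    simpa [Prod.norm_def] using max_le_max (hCf x) (hCg x)
  refine ⟨uniformContinuousOn_univ.1 ?_, Cf * Cg, fun x => ?_⟩
  · exact hbdd.uniformContinuousOn_smul.comp (hfu.prodMk hgu).uniformContinuousOn
      fun x _ => mem_range_self x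
  · rw [abs_mul]
    exact mul_le_mul (hCf x) (hCg x) (abs_nonneg _) ((abs_nonneg _).trans (hCf x))

variable [MeasurableSpace α] [OpensMeasurableSpace α] [MeasurableSpace β] [OpensMeasurableSpace β]

theorem integrable_mul_prod {g : β → ℝ} (hf : BoundedUniformContinuous f)
    (hg : BoundedUniformContinuous g) (μ : Measure (α × β)) [IsFiniteMeasure μ] :
    Integrable (fun z => f z.1 * g z.2) μ :=
  let ⟨C, hC⟩ := ((hf.comp uniformContinuous_fst).mul (hg.comp uniformContinuous_snd)).2
  .of_bound ((hf.1.continuous.measurable.comp measurable_fst).mul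
    (hg.1.continuous.measurable.comp measurable_snd)).aestronglyMeasurable C (ae_of_all _ hC)

end BoundedUniformContinuous

theorem boundedUniformContinuous_min_dist_one {E : Type*} [PseudoMetricSpace E] (c : E) :
    BoundedUniformContinuous fun x : E => min (dist x c) 1 := by
  refine ⟨?_, 1, fun x => ?_⟩
  · exact lipschitzWith_min.uniformContinuous.comp
      ((uniformContinuous_id.dist uniformContinuous_const).prodMk uniformContinuous_const)
  · rw [abs_of_nonneg (le_min dist_nonneg zero_le_one)]
    exact min_le_right _ _

theorem exists_boundedUniformContinuous_cutoff {E : Type*} [PseudoMetricSpace E] (K : Set E)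
    {r : ℝ} (hr : 0 < r) :
    ∃ φ : E → ℝ, BoundedUniformContinuous φ ∧ (∀ x, 0 ≤ φ x ∧ φ x ≤ 1) ∧
      (∀ x ∈ K, φ x = 1) ∧ ∀ x ∉ thickening r K, φ x = 0 := by
  refine ⟨fun x => thickenedIndicator hr K x, ⟨uniformContinuous_subtype_val.comp
    (lipschitzWith_thickenedIndicator hr K).uniformContinuous, 1, fun x => ?_⟩,
    fun x => ⟨(thickenedIndicator hr K x).2, ?_⟩, fun x hx => ?_, fun x hx => ?_⟩
  · rw [NNReal.abs_eq]
    exact_mod_cast thickenedIndicator_le_one hr K x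
  · exact_mod_cast thickenedIndicator_le_one hr K x
  · simp [thickenedIndicator_one hr K hx]
  · simp [thickenedIndicator_zero hr K hx]

theorem Metric.mk_mem_thickening_prod {α β : Type*} [PseudoMetricSpace α]
    [PseudoMetricSpace β] {r : ℝ} {s : Set α} {t : Set β} {x : α} {y : β}
    (hx : x ∈ thickening r s) (hy : y ∈ thickening r t) : (x, y) ∈ thickening r (s ×ˢ t) := by
  obtain ⟨a, ha, hxa⟩ := mem_thickening_iff.1 hx
  obtain ⟨b, hb, hyb⟩ := mem_thickening_iff.1 hy
  exact mem_thickening_iff.2 ⟨(a, b), ⟨ha, hb⟩, max_lt hxa hyb⟩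

section StoneWeierstrass

variable {E₁ E₂ : Type*} [MetricSpace E₁] [MetricSpace E₂] {K₁ : Set E₁} {K₂ : Set E₂}

def boundedUniformContinuousTensors (K₁ : Set E₁) (K₂ : Set E₂) : Set C(K₁ × K₂, ℝ) :=
  {F | ∃ (f : E₁ → ℝ) (g : E₂ → ℝ), BoundedUniformContinuous f ∧
    BoundedUniformContinuous g ∧ ∀ p : K₁ × K₂, F p = f p.1 * g p.2}

theorem one_mem_boundedUniformContinuousTensors :
    (1 : C(K₁ × K₂, ℝ)) ∈ boundedUniformContinuousTensors K₁ K₂ :=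
  ⟨_, _, .const 1, .const 1, fun _ => (mul_one 1).symm⟩

theorem mul_mem_boundedUniformContinuousTensors {F G : C(K₁ × K₂, ℝ)}
    (hF : F ∈ boundedUniformContinuousTensors K₁ K₂)
    (hG : G ∈ boundedUniformContinuousTensors K₁ K₂) :
    F * G ∈ boundedUniformContinuousTensors K₁ K₂ := by
  obtain ⟨f₁, g₁, hf₁, hg₁, hF⟩ := hF
  obtain ⟨f₂, g₂, hf₂, hg₂, hG⟩ := hG
  refine ⟨_, _, hf₁.mul hf₂, hg₁.mul hg₂, fun p => ?_⟩
  simp only [ContinuousMap.mul_apply, hF, hG]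
  ring

def boundedUniformContinuousTensorAlgebra (K₁ : Set E₁) (K₂ : Set E₂) :
    Subalgebra ℝ C(K₁ × K₂, ℝ) :=
  (Submodule.span ℝ (boundedUniformContinuousTensors K₁ K₂)).toSubalgebra
    (Submodule.subset_span one_mem_boundedUniformContinuousTensors) fun F G hF hG => by
      have hle := Submodule.span_mul_span ℝ (boundedUniformContinuousTensors K₁ K₂)
        (boundedUniformContinuousTensors K₁ K₂) ▸
        Submodule.span_le.2 (Set.mul_subset_iff.2 fun F hF G hG =>
          Submodule.subset_span (mul_mem_boundedUniformContinuousTensors hF hG))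
      exact hle (Submodule.mul_mem_mul hF hG)

theorem separatesPoints_boundedUniformContinuousTensorAlgebra :
    (boundedUniformContinuousTensorAlgebra K₁ K₂).SeparatesPoints := by
  have mem {f : E₁ → ℝ} {g : E₂ → ℝ} (hf : BoundedUniformContinuous f)
      (hg : BoundedUniformContinuous g) :
      (fun p : K₁ × K₂ => f p.1 * g p.2) ∈
        (fun F : C(K₁ × K₂, ℝ) => ⇑F) '' boundedUniformContinuousTensorAlgebra K₁ K₂ :=
    ⟨⟨_, (hf.1.continuous.comp (continuous_subtype_val.comp continuous_fst)).mul
      (hg.1.continuous.comp (continuous_subtype_val.comp continuous_snd))⟩,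
      Submodule.subset_span ⟨f, g, hf, hg, fun _ => rfl⟩, rfl⟩
  rintro ⟨x₁, y₁⟩ ⟨x₂, y₂⟩ hne
  by_cases hx : x₁ = x₂
  · have hy : (y₁ : E₂) ≠ y₂ := fun hy => hne (Prod.ext hx (Subtype.ext hy))
    refine ⟨_, mem (.const 1) (boundedUniformContinuous_min_dist_one (y₂ : E₂)), ?_⟩
    simpa using (lt_min (dist_pos.2 hy) one_pos).ne'
  · have hx : (x₁ : E₁) ≠ x₂ := fun h => hx (Subtype.ext h)
    refine ⟨_, mem (boundedUniformContinuous_min_dist_one (x₂ : E₁)) (.const 1), ?_⟩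
    simpa using (lt_min (dist_pos.2 hx) one_pos).ne'

theorem exists_sum_mul_near_on_prod (hK₁ : IsCompact K₁) (hK₂ : IsCompact K₂)
    {h : E₁ × E₂ → ℝ} (hh : Continuous h) {ε : ℝ} (hε : 0 < ε) :
    ∃ (m : ℕ) (f : Fin m → E₁ → ℝ) (g : Fin m → E₂ → ℝ),
      (∀ i, BoundedUniformContinuous (f i)) ∧ (∀ i, BoundedUniformContinuous (g i)) ∧
      ∀ z ∈ K₁ ×ˢ K₂, |∑ i, f i z.1 * g i z.2 - h z| < ε := by
  have := isCompact_iff_compactSpace.1 hK₁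
  have := isCompact_iff_compactSpace.1 hK₂
  obtain ⟨⟨F, hF⟩, hFh⟩ :=
    ContinuousMap.exists_mem_subalgebra_near_continuous_of_separatesPoints _
      separatesPoints_boundedUniformContinuousTensorAlgebra (fun p : K₁ × K₂ => h (p.1, p.2))
      (by fun_prop) ε hε
  obtain ⟨m, c, v, rfl⟩ := Submodule.mem_span_set'.1 hF
  choose f g hf hg hv using fun i => (v i).2
  refine ⟨m, fun i x => c i * f i x, g, fun i => (BoundedUniformContinuous.const _).mul (hf i),
    hg, fun z hz => ?_⟩
  simpa [hv, mul_assoc] using hFh (⟨z.1, hz.1⟩, ⟨z.2, hz.2⟩)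

theorem exists_sum_mul_near_on_prod_of_abs_le (hK₁ : IsCompact K₁) (hK₂ : IsCompact K₂)
    {h : E₁ × E₂ → ℝ} (hh : Continuous h) {C : ℝ} (hC : ∀ z, |h z| ≤ C) {ε : ℝ}
    (hε : 0 < ε) :
    ∃ (m : ℕ) (F : Fin m → E₁ → ℝ) (G : Fin m → E₂ → ℝ),
      (∀ i, BoundedUniformContinuous (F i)) ∧ (∀ i, BoundedUniformContinuous (G i)) ∧
      (∀ z : E₁ × E₂, |∑ i, F i z.1 * G i z.2| ≤ C + 1) ∧
      ∀ z ∈ K₁ ×ˢ K₂, |∑ i, F i z.1 * G i z.2 - h z| < ε := by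
  obtain ⟨m, f, g, hf, hg, hfg⟩ := exists_sum_mul_near_on_prod hK₁ hK₂ hh (lt_min hε one_pos)
  set s : E₁ × E₂ → ℝ := fun z => ∑ i, f i z.1 * g i z.2
  have hs : Continuous s := continuous_finsetSum _ fun i _ =>
    ((hf i).1.continuous.comp continuous_fst).mul ((hg i).1.continuous.comp continuous_snd)
  have hsK : K₁ ×ˢ K₂ ⊆ {z | |s z| < C + 1} := fun z hz => by
    have hsh : |s z - h z| < 1 := (hfg z hz).trans_le (min_le_right _ _)
    have := abs_sub_abs_le_abs_sub (s z) (h z)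
    exact show |s z| < C + 1 by linarith [hC z]
  -- `s` is only controlled on `K₁ × K₂`; cutoffs supported where `|s| < C + 1` bound it globally.
  obtain ⟨r, hr, hrs⟩ :=
    (hK₁.prod hK₂).exists_thickening_subset_open (isOpen_lt hs.abs continuous_const) hsK
  obtain ⟨φ, hφ, hφ01, hφK, hφ0⟩ := exists_boundedUniformContinuous_cutoff K₁ hr
  obtain ⟨ψ, hψ, hψ01, hψK, hψ0⟩ := exists_boundedUniformContinuous_cutoff K₂ hr
  have hsum (z : E₁ × E₂) :
      ∑ i, f i z.1 * φ z.1 * (g i z.2 * ψ z.2) = s z * (φ z.1 * ψ z.2) := by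
    simp only [s, Finset.sum_mul]
    exact Finset.sum_congr rfl fun i _ => by ring
  refine ⟨m, fun i x => f i x * φ x, fun i y => g i y * ψ y, fun i => (hf i).mul hφ,
    fun i => (hg i).mul hψ, fun z => ?_, fun z hz => ?_⟩
  · rw [hsum]
    by_cases hz : z.1 ∈ thickening r K₁ ∧ z.2 ∈ thickening r K₂
    · have hsz : |s z| < C + 1 := hrs (mk_mem_thickening_prod hz.1 hz.2)
      rw [abs_mul, abs_of_nonneg (mul_nonneg (hφ01 _).1 (hψ01 _).1)]
      exact (mul_le_of_le_one_right (abs_nonneg _)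
        (mul_le_one₀ (hφ01 _).2 (hψ01 _).1 (hψ01 _).2)).trans hsz.le
    · have hφψ : φ z.1 * ψ z.2 = 0 := by
        rcases not_and_or.1 hz with hz | hz
        · simp [hφ0 _ hz]
        · simp [hψ0 _ hz]
      rw [hφψ, mul_zero, abs_zero]
      linarith [abs_nonneg (h z), hC z]
  · rw [hsum, hφK _ hz.1, hψK _ hz.2, mul_one, mul_one]
    exact (hfg z hz).trans_le (min_le_left _ _)

end StoneWeierstrass

section Integral

variable {α : Type*} [MeasurableSpace α]

theorem abs_integral_le_of_abs_le_on {μ : Measure α} [IsFiniteMeasure μ] {u : α → ℝ}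
    (hu : Integrable u μ) {s : Set α} (hs : MeasurableSet s) {a b : ℝ}
    (ha : ∀ x ∈ s, |u x| ≤ a) (hb : ∀ x ∈ sᶜ, |u x| ≤ b) :
    |∫ x, u x ∂μ| ≤ a * μ.real s + b * μ.real sᶜ :=
  calc |∫ x, u x ∂μ| = |∫ x in s, u x ∂μ + ∫ x in sᶜ, u x ∂μ| := by
        rw [integral_add_compl hs hu]
    _ ≤ ‖∫ x in s, u x ∂μ‖ + ‖∫ x in sᶜ, u x ∂μ‖ := abs_add_le _ _
    _ ≤ a * μ.real s + b * μ.real sᶜ := add_le_add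
        (norm_setIntegral_le_of_norm_le_const (measure_lt_top μ s) ha)
        (norm_setIntegral_le_of_norm_le_const (measure_lt_top μ sᶜ) hb)

theorem abs_integral_sub_integral_le_of_abs_sub_le_on [TopologicalSpace α]
    [OpensMeasurableSpace α] {ρ π : Measure α} [IsProbabilityMeasure ρ]
    [IsProbabilityMeasure π] {h S : α → ℝ} {C C' : ℝ} (hh : Continuous h) (hS : Continuous S)
    (hhC : ∀ x, |h x| ≤ C) (hSC : ∀ x, |S x| ≤ C') {s : Set α} (hs : MeasurableSet s)
    {ε δ : ℝ} (hε : 0 ≤ ε) (hSh : ∀ x ∈ s, |S x - h x| ≤ ε)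
    (hρ : 1 - δ ≤ ρ.real s) (hπ : 1 - δ ≤ π.real s) :
    |∫ x, h x ∂ρ - ∫ x, h x ∂π| ≤
      2 * (ε + (C + C') * δ) + |∫ x, S x ∂ρ - ∫ x, S x ∂π| := by
  obtain ⟨x₀⟩ := nonempty_of_isProbabilityMeasure ρ
  have hCC' : 0 ≤ C + C' := by linarith [abs_nonneg (h x₀), abs_nonneg (S x₀), hhC x₀, hSC x₀]
  have hint (μ : Measure α) [IsFiniteMeasure μ] : Integrable h μ ∧ Integrable S μ :=
    ⟨.of_bound hh.aestronglyMeasurable C (ae_of_all _ hhC),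
      .of_bound hS.aestronglyMeasurable C' (ae_of_all _ hSC)⟩
  have herr (μ : Measure α) [IsProbabilityMeasure μ] (hμ : 1 - δ ≤ μ.real s) :
      |∫ x, S x ∂μ - ∫ x, h x ∂μ| ≤ ε + (C + C') * δ := by
    have hSh' : ∀ x ∈ sᶜ, |S x - h x| ≤ C + C' := fun x _ =>
      (abs_sub _ _).trans (by linarith [hhC x, hSC x])
    rw [← integral_sub (hint μ).2 (hint μ).1]
    refine (abs_integral_le_of_abs_le_on ((hint μ).2.sub (hint μ).1) hs hSh hSh').trans ?_
    rw [probReal_compl_eq_one_sub hs]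
    gcongr
    · exact mul_le_of_le_one_right hε measureReal_le_one
    · linarith
  have hρ' := herr ρ hρ
  have hπ' := herr π hπ
  rw [abs_le] at hρ' hπ' ⊢
  constructor <;> linarith [le_abs_self (∫ x, S x ∂ρ - ∫ x, S x ∂π),
    neg_abs_le (∫ x, S x ∂ρ - ∫ x, S x ∂π)]

end Integral

section RandomElements

variable {α β Ω : Type*} [MeasurableSpace α] [MeasurableSpace β] [MeasurableSpace Ω]
  {P : Measure Ω} {X : Ω → α} {Y : Ω → β}

theorem one_sub_two_mul_le_measureReal_map_prodMk [IsProbabilityMeasure P] (hX : Measurable X)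
    (hY : Measurable Y) {s : Set α} {t : Set β} (hs : MeasurableSet s) (ht : MeasurableSet t)
    {ε : ℝ} (hXs : 1 - ε ≤ P.real (X ⁻¹' s)) (hYt : 1 - ε ≤ P.real (Y ⁻¹' t)) :
    1 - 2 * ε ≤ (P.map fun ω => (X ω, Y ω)).real (s ×ˢ t) := by
  rw [map_measureReal_apply (hX.prodMk hY) (hs.prod ht), mk_preimage_prod]
  have := measureReal_union_le (μ := P) (X ⁻¹' s)ᶜ (Y ⁻¹' t)ᶜ
  rw [← compl_inter, probReal_compl_eq_one_sub ((hX hs).inter (hY ht)),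
    probReal_compl_eq_one_sub (hX hs), probReal_compl_eq_one_sub (hY ht)] at this
  linarith

theorem one_sub_two_mul_le_measureReal_prod_map [IsProbabilityMeasure P] (hX : Measurable X)
    (hY : Measurable Y) {s : Set α} {t : Set β} (hs : MeasurableSet s) (ht : MeasurableSet t)
    {ε : ℝ} (hXs : 1 - ε ≤ P.real (X ⁻¹' s)) (hYt : 1 - ε ≤ P.real (Y ⁻¹' t)) :
    1 - 2 * ε ≤ ((P.map X).prod (P.map Y)).real (s ×ˢ t) := by
  rw [measureReal_prod_prod, map_measureReal_apply hX hs, map_measureReal_apply hY ht]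
  have hX1 : P.real (X ⁻¹' s) ≤ 1 := measureReal_le_one
  have hY1 : P.real (Y ⁻¹' t) ≤ 1 := measureReal_le_one
  nlinarith [mul_nonneg (sub_nonneg.2 hX1) (sub_nonneg.2 hY1)]

variable [UniformSpace α] [OpensMeasurableSpace α] [UniformSpace β] [OpensMeasurableSpace β]

theorem integral_map_prodMk_sub_integral_prod_map [IsFiniteMeasure P] {ι : Type*} [Fintype ι]
    (hX : Measurable X) (hY : Measurable Y) {F : ι → α → ℝ} {G : ι → β → ℝ}
    (hF : ∀ i, BoundedUniformContinuous (F i)) (hG : ∀ i, BoundedUniformContinuous (G i)) :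
    ∫ z, ∑ i, F i z.1 * G i z.2 ∂(P.map fun ω => (X ω, Y ω))
        - ∫ z, ∑ i, F i z.1 * G i z.2 ∂((P.map X).prod (P.map Y))
      = ∑ i, (∫ ω, F i (X ω) * G i (Y ω) ∂P
        - (∫ ω, F i (X ω) ∂P) * ∫ ω, G i (Y ω) ∂P) := by
  have hint (μ : Measure (α × β)) [IsFiniteMeasure μ] (i : ι) :=
    (hF i).integrable_mul_prod (hG i) μ
  rw [integral_finsetSum _ fun i _ => hint _ i, integral_finsetSum _ fun i _ => hint _ i,
    ← Finset.sum_sub_distrib]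
  refine Finset.sum_congr rfl fun i _ => ?_
  rw [integral_map (hX.prodMk hY).aemeasurable (hint _ i).1, integral_prod_mul,
    integral_map hX.aemeasurable (hF i).1.continuous.aestronglyMeasurable,
    integral_map hY.aemeasurable (hG i).1.continuous.aestronglyMeasurable]

theorem abs_integral_comp_prodMk_sub_integral_prod_map_le [IsProbabilityMeasure P]
    [OpensMeasurableSpace (α × β)]
    (hX : Measurable X) (hY : Measurable Y) {h : α × β → ℝ} (hh : Continuous h) {C C' : ℝ}
    (hC : ∀ z, |h z| ≤ C) {ι : Type*} [Fintype ι] {F : ι → α → ℝ} {G : ι → β → ℝ}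
    (hF : ∀ i, BoundedUniformContinuous (F i)) (hG : ∀ i, BoundedUniformContinuous (G i))
    (hC' : ∀ z : α × β, |∑ i, F i z.1 * G i z.2| ≤ C') {s : Set α} {t : Set β}
    (hs : MeasurableSet s) (ht : MeasurableSet t) {ε : ℝ} (hε : 0 ≤ ε)
    (hFG : ∀ z ∈ s ×ˢ t, |∑ i, F i z.1 * G i z.2 - h z| ≤ ε)
    (hXs : 1 - ε ≤ P.real (X ⁻¹' s)) (hYt : 1 - ε ≤ P.real (Y ⁻¹' t)) :
    |∫ ω, h (X ω, Y ω) ∂P - ∫ z, h z ∂((P.map X).prod (P.map Y))| ≤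
      2 * (ε + (C + C') * (2 * ε)) + |∑ i, (∫ ω, F i (X ω) * G i (Y ω) ∂P
        - (∫ ω, F i (X ω) ∂P) * ∫ ω, G i (Y ω) ∂P)| := by
  have := Measure.isProbabilityMeasure_map (μ := P) (hX.prodMk hY).aemeasurable
  have := Measure.isProbabilityMeasure_map (μ := P) hX.aemeasurable
  have := Measure.isProbabilityMeasure_map (μ := P) hY.aemeasurable
  rw [← integral_map (hX.prodMk hY).aemeasurable hh.aestronglyMeasurable,
    ← integral_map_prodMk_sub_integral_prod_map hX hY hF hG]
  exact abs_integral_sub_integral_le_of_abs_sub_le_on hh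
    (continuous_finsetSum _ fun i _ =>
      ((hF i).1.continuous.comp continuous_fst).mul ((hG i).1.continuous.comp continuous_snd))
    hC hC' (hs.prod ht) hε hFG
    (one_sub_two_mul_le_measureReal_map_prodMk hX hY hs ht hXs hYt)
    (one_sub_two_mul_le_measureReal_prod_map hX hY hs ht hXs hYt)

end RandomElements

theorem tendsto_zero_of_forall_eventually_abs_le_mul {ι : Type*} {l : Filter ι} {a : ι → ℝ}
    (c : ℝ) (h : ∀ ε > 0, ∀ᶠ i in l, |a i| ≤ c * ε) : Tendsto a l (𝓝 0) := by
  refine Metric.tendsto_nhds.2 fun η hη => ?_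
  filter_upwards [h (η / (|c| + 1)) (by positivity)] with i hi
  rw [Real.dist_eq, sub_zero]
  calc |a i| ≤ c * (η / (|c| + 1)) := hi
    _ ≤ |c| * (η / (|c| + 1)) := by gcongr; exact le_abs_self c
    _ < η := by
      rw [mul_div_assoc', div_lt_iff₀ (by positivity)]
      nlinarith

theorem stmt_17_general {Ω E₁ E₂ : Type*} [MeasurableSpace Ω]
    [MetricSpace E₁] [SecondCountableTopology E₁]
    [MeasurableSpace E₁] [BorelSpace E₁]
    [MetricSpace E₂] [MeasurableSpace E₂] [BorelSpace E₂]
    (P : Measure Ω) [IsProbabilityMeasure P]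
    (X : ℕ → Ω → E₁) (Y : ℕ → Ω → E₂)
    (hX : ∀ n, Measurable (X n)) (hY : ∀ n, Measurable (Y n))
    (htightX : ∀ ε : ℝ, 0 < ε → ∃ K : Set E₁, IsCompact K ∧
      ∀ n, (P {ω | X n ω ∈ K}).toReal ≥ 1 - ε)
    (htightY : ∀ ε : ℝ, 0 < ε → ∃ K : Set E₂, IsCompact K ∧
      ∀ n, (P {ω | Y n ω ∈ K}).toReal ≥ 1 - ε)
    (hAI0 : ∀ f : E₁ → ℝ, ∀ g : E₂ → ℝ,
      UniformContinuous f → UniformContinuous g →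
      (∃ C, ∀ x, |f x| ≤ C) → (∃ C, ∀ y, |g y| ≤ C) →
      Tendsto (fun n =>
          (∫ ω, f (X n ω) * g (Y n ω) ∂P)
            - (∫ ω, f (X n ω) ∂P) * (∫ ω, g (Y n ω) ∂P))
        atTop (nhds 0)) :
    ∀ h : E₁ × E₂ → ℝ,
      UniformContinuous h → (∃ C, ∀ z, |h z| ≤ C) →
      Tendsto (fun n =>
          (∫ ω, h (X n ω, Y n ω) ∂P)
            - ∫ z, h z ∂((P.map (X n)).prod (P.map (Y n))))
        atTop (nhds 0) := by
  rintro h hh ⟨C, hC⟩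
  refine tendsto_zero_of_forall_eventually_abs_le_mul (2 * (1 + 2 * (2 * C + 1)) + 1)
    fun ε hε => ?_
  obtain ⟨K₁, hK₁, hXK⟩ := htightX ε hε
  obtain ⟨K₂, hK₂, hYK⟩ := htightY ε hε
  obtain ⟨m, F, G, hF, hG, hS, hSh⟩ :=
    exists_sum_mul_near_on_prod_of_abs_le hK₁ hK₂ hh.continuous hC hε
  have hcov : Tendsto (fun n => ∑ i, (∫ ω, F i (X n ω) * G i (Y n ω) ∂P
      - (∫ ω, F i (X n ω) ∂P) * ∫ ω, G i (Y n ω) ∂P)) atTop (𝓝 0) := by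
    simpa using tendsto_finsetSum Finset.univ fun i _ =>
      hAI0 (F i) (G i) (hF i).1 (hG i).1 (hF i).2 (hG i).2
  filter_upwards [Metric.tendsto_nhds.1 hcov ε hε] with n hn
  rw [Real.dist_eq, sub_zero] at hn
  have := abs_integral_comp_prodMk_sub_integral_prod_map_le (hX n) (hY n) hh.continuous hC
    hF hG hS hK₁.measurableSet hK₂.measurableSet hε.le (fun z hz => (hSh z hz).le)
    (hXK n) (hYK n)
  linarith

theorem stmt_17 {Ω E₁ E₂ : Type*} [MeasurableSpace Ω]
    [MetricSpace E₁] [CompleteSpace E₁] [SecondCountableTopology E₁]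
    [MeasurableSpace E₁] [BorelSpace E₁]
    [MetricSpace E₂] [CompleteSpace E₂] [SecondCountableTopology E₂]
    [MeasurableSpace E₂] [BorelSpace E₂]
    (P : Measure Ω) [IsProbabilityMeasure P]
    (X : ℕ → Ω → E₁) (Y : ℕ → Ω → E₂)
    (hX : ∀ n, Measurable (X n)) (hY : ∀ n, Measurable (Y n))
    (htightX : ∀ ε : ℝ, 0 < ε → ∃ K : Set E₁, IsCompact K ∧
      ∀ n, (P {ω | X n ω ∈ K}).toReal ≥ 1 - ε)
    (htightY : ∀ ε : ℝ, 0 < ε → ∃ K : Set E₂, IsCompact K ∧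
      ∀ n, (P {ω | Y n ω ∈ K}).toReal ≥ 1 - ε)
    (hAI0 : ∀ f : E₁ → ℝ, ∀ g : E₂ → ℝ,
      UniformContinuous f → UniformContinuous g →
      (∃ C, ∀ x, |f x| ≤ C) → (∃ C, ∀ y, |g y| ≤ C) →
      Tendsto (fun n =>
          (∫ ω, f (X n ω) * g (Y n ω) ∂P)
            - (∫ ω, f (X n ω) ∂P) * (∫ ω, g (Y n ω) ∂P))
        atTop (nhds 0)) :
    ∀ h : E₁ × E₂ → ℝ,
      UniformContinuous h → (∃ C, ∀ z, |h z| ≤ C) →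
      Tendsto (fun n =>
          (∫ ω, h (X n ω, Y n ω) ∂P)
            - ∫ z, h z ∂((P.map (X n)).prod (P.map (Y n))))
        atTop (nhds 0) :=
  stmt_17_general P X Y hX hY htightX htightY hAI0
end

section
/- There exist sequences of real random variables (X_n), (Y_n) satisfying AI-1 (merging of the joint law with the product of marginal laws) but not AI-2: specifically, with X, Y independent uniform on {0,1} and X_n = X + Y/n, Y_n = Y, one has E h(X_n,Y_n) − ∫ h d(P_{X_n} × P_{Y_n}) → 0 for every bounded uniformly continuous h : ℝ² → ℝ, while |P{X_n = 1, Y_n = 1} − P{X_n = 1}P{Y_n = 1}| → 1/8 ≠ 0. -/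
/-!
Since `Xₙ → X` pointwise and `X ⟂ Y`, dominated convergence shows that both the joint law of
`(Xₙ, Y)` and the product of its marginals converge weakly to the law of `(X, Y)`; this is AI-1.
AI-2 fails because, for `n ≥ 2` and `X, Y ∈ {0, 1}`, `Xₙ = 1` holds exactly when `X = 1, Y = 0`,
an event disjoint from `{Y = 1}`: the joint probability is `0`, the product of the marginals
is `1/4 · 1/2`.
-/

open MeasureTheory Filter Topology ProbabilityTheory

theorem tendsto_integral_comp_of_ae_tendsto {α β : Type*} [MeasurableSpace α]
    [TopologicalSpace β] [MeasurableSpace β] [OpensMeasurableSpace β]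
    {μ : Measure α} [IsFiniteMeasure μ] {f : ℕ → α → β} {g : α → β} {h : β → ℝ}
    (hh : Continuous h) (hbdd : ∃ C, ∀ z, |h z| ≤ C) (hf : ∀ n, AEMeasurable (f n) μ)
    (hfg : ∀ᵐ a ∂μ, Tendsto (fun n => f n a) atTop (𝓝 (g a))) :
    Tendsto (fun n => ∫ a, h (f n a) ∂μ) atTop (𝓝 (∫ a, h (g a) ∂μ)) := by
  obtain ⟨C, hC⟩ := hbdd
  exact tendsto_integral_of_dominated_convergence (fun _ => C)
    (fun n => (hh.measurable.comp_aemeasurable (hf n)).aestronglyMeasurable)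
    (integrable_const C) (fun n => ae_of_all _ fun a => hC _)
    (hfg.mono fun a ha => (hh.tendsto _).comp ha)

theorem integral_prod_map_map {α β γ δ : Type*} [MeasurableSpace α] [MeasurableSpace β]
    [MeasurableSpace γ] [MeasurableSpace δ] {μ : Measure α} {ν : Measure β}
    [SigmaFinite μ] [SigmaFinite ν] {f : α → γ} {g : β → δ} {h : γ × δ → ℝ}
    (hf : Measurable f) (hg : Measurable g) (hh : Measurable h) :
    ∫ z, h z ∂((μ.map f).prod (ν.map g)) = ∫ p, h (f p.1, g p.2) ∂(μ.prod ν) := by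
  rw [Measure.map_prod_map _ _ hf hg,
    integral_map (hf.prodMap hg).aemeasurable hh.aestronglyMeasurable]
  rfl

section Independence

variable {Ω β γ : Type*} [MeasurableSpace Ω] {P : Measure Ω} [IsProbabilityMeasure P]
  [TopologicalSpace β] [MeasurableSpace β] [OpensMeasurableSpace β]
  [TopologicalSpace γ] [MeasurableSpace γ] [OpensMeasurableSpace γ]
  [SecondCountableTopologyEither β γ]

theorem tendsto_integral_sub_integral_prod_map_of_indepFun {X : Ω → β} {Y : Ω → γ}
    {Xn : ℕ → Ω → β} {Yn : ℕ → Ω → γ} (hX : Measurable X) (hY : Measurable Y)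
    (hindep : IndepFun X Y P) (hXn : ∀ n, Measurable (Xn n)) (hYn : ∀ n, Measurable (Yn n))
    (hXlim : ∀ ω, Tendsto (fun n => Xn n ω) atTop (𝓝 (X ω)))
    (hYlim : ∀ ω, Tendsto (fun n => Yn n ω) atTop (𝓝 (Y ω)))
    {h : β × γ → ℝ} (hh : Continuous h) (hbdd : ∃ C, ∀ z, |h z| ≤ C) :
    Tendsto (fun n => (∫ ω, h (Xn n ω, Yn n ω) ∂P)
        - ∫ z, h z ∂((P.map (Xn n)).prod (P.map (Yn n)))) atTop (𝓝 0) := by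
  have hjoint : Tendsto (fun n => ∫ ω, h (Xn n ω, Yn n ω) ∂P) atTop
      (𝓝 (∫ ω, h (X ω, Y ω) ∂P)) :=
    tendsto_integral_comp_of_ae_tendsto hh hbdd (fun n => ((hXn n).prodMk (hYn n)).aemeasurable)
      (ae_of_all _ fun ω => (hXlim ω).prodMk_nhds (hYlim ω))
  have hprod : Tendsto (fun n => ∫ z, h z ∂((P.map (Xn n)).prod (P.map (Yn n)))) atTop
      (𝓝 (∫ p, h (X p.1, Y p.2) ∂(P.prod P))) := by
    simp only [integral_prod_map_map (hXn _) (hYn _) hh.measurable]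
    exact tendsto_integral_comp_of_ae_tendsto hh hbdd
      (fun n => (((hXn n).comp measurable_fst).prodMk ((hYn n).comp measurable_snd)).aemeasurable)
      (ae_of_all _ fun p => (hXlim p.1).prodMk_nhds (hYlim p.2))
  have hlimits : ∫ p, h (X p.1, Y p.2) ∂(P.prod P) = ∫ ω, h (X ω, Y ω) ∂P := by
    rw [← integral_prod_map_map hX hY hh.measurable,
      ← (indepFun_iff_map_prod_eq_prod_map_map hX.aemeasurable hY.aemeasurable).mp hindep,
      integral_map (hX.prodMk hY).aemeasurable hh.aestronglyMeasurable]
  rw [hlimits] at hprod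
  simpa using hjoint.sub hprod

end Independence

theorem add_div_eq_one_iff {x y n : ℝ} (hx : x = 0 ∨ x = 1) (hy : y = 0 ∨ y = 1) (hn : 1 < n) :
    x + y / n = 1 ↔ x = 1 ∧ y = 0 := by
  rcases hx with rfl | rfl <;> rcases hy with rfl | rfl <;>
    simp [hn.ne', (zero_lt_one.trans hn).ne']

theorem ae_eq_or_eq_of_measure_add_eq_one {Ω : Type*} [MeasurableSpace Ω] {P : Measure Ω}
    [IsProbabilityMeasure P] {X : Ω → ℝ} (hX : Measurable X) {a b : ℝ} (hab : a ≠ b)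
    (h : P {ω | X ω = a} + P {ω | X ω = b} = 1) : ∀ᵐ ω ∂P, X ω = a ∨ X ω = b := by
  have hdisj : Disjoint {ω | X ω = a} {ω | X ω = b} :=
    Set.disjoint_left.mpr fun ω ha hb => hab (ha.symm.trans hb)
  have hmeas : MeasurableSet {ω | X ω = a ∨ X ω = b} :=
    (hX (measurableSet_singleton a)).union (hX (measurableSet_singleton b))
  rw [ae_iff_measure_eq hmeas.nullMeasurableSet, measure_univ, Set.ofPred_or,
    measure_union hdisj (hX (measurableSet_singleton b)), h]

theorem stmt_19 {Ω : Type*} [MeasurableSpace Ω]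
    (P : Measure Ω) [IsProbabilityMeasure P]
    (X Y : Ω → ℝ) (hX : Measurable X) (hY : Measurable Y)
    (hindep : ProbabilityTheory.IndepFun X Y P)
    (hX0 : P {ω | X ω = 0} = 1 / 2) (hX1 : P {ω | X ω = 1} = 1 / 2)
    (hY0 : P {ω | Y ω = 0} = 1 / 2) (hY1 : P {ω | Y ω = 1} = 1 / 2) :
    -- AI-1 holds for X_n = X + Y/n, Y_n = Y
    (∀ h : ℝ × ℝ → ℝ,
      UniformContinuous h → (∃ C, ∀ z, |h z| ≤ C) →
      Tendsto (fun n : ℕ =>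
          (∫ ω, h (X ω + Y ω / n, Y ω) ∂P)
            - ∫ z, h z ∂((P.map (fun ω => X ω + Y ω / n)).prod (P.map Y)))
        atTop (nhds 0))
    -- but AI-2 fails: for A = B = {1} the difference tends to 1/8 ≠ 0
    ∧ Tendsto (fun n : ℕ =>
        |(P {ω | X ω + Y ω / n = 1 ∧ Y ω = 1}).toReal
          - (P {ω | X ω + Y ω / n = 1}).toReal * (P {ω | Y ω = 1}).toReal|)
      atTop (nhds (1 / 8))
    ∧ (1 / 8 : ℝ) ≠ 0 := by
  refine ⟨fun h huc hbdd => ?_, ?_, by norm_num⟩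
  · have hXlim (ω : Ω) : Tendsto (fun n : ℕ => X ω + Y ω / n) atTop (𝓝 (X ω)) := by
      simpa using tendsto_const_nhds.add
        (tendsto_const_nhds.div_atTop (tendsto_natCast_atTop_atTop (R := ℝ)))
    exact tendsto_integral_sub_integral_prod_map_of_indepFun hX hY hindep
      (fun n => hX.add (hY.div_const _)) (fun _ => hY) hXlim (fun _ => tendsto_const_nhds)
      huc.continuous hbdd
  · have hXae := ae_eq_or_eq_of_measure_add_eq_one hX zero_ne_one
      (by rw [hX0, hX1, ENNReal.add_halves])
    have hYae := ae_eq_or_eq_of_measure_add_eq_one hY zero_ne_one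
      (by rw [hY0, hY1, ENNReal.add_halves])
    refine tendsto_const_nhds.congr' ?_
    filter_upwards [eventually_gt_atTop 1] with n hn
    have hiff : ∀ᵐ ω ∂P, (X ω + Y ω / n = 1 ↔ X ω = 1 ∧ Y ω = 0) := by
      filter_upwards [hXae, hYae] with ω hx hy
      exact add_div_eq_one_iff hx hy (by exact_mod_cast hn)
    have hjoint : P {ω | X ω + Y ω / n = 1 ∧ Y ω = 1} = 0 := by
      rw [measure_eq_zero_iff_ae_notMem]
      filter_upwards [hiff] with ω h
      simp +contextual [h]
    have hmarg : P {ω | X ω + Y ω / n = 1} = P {ω | X ω = 1} * P {ω | Y ω = 0} := by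
      have hset : {ω | X ω + Y ω / n = 1} =ᵐ[P] {ω | X ω = 1 ∧ Y ω = 0} :=
        eventuallyEq_set.mpr hiff
      rw [measure_congr hset]
      exact hindep.measure_inter_preimage_eq_mul _ _ (measurableSet_singleton 1)
        (measurableSet_singleton 0)
    rw [hjoint, hmarg, hX1, hY0, hY1]
    norm_num [ENNReal.toReal_div]
end
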